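/- arXiv:2310.14725 — 11 statements merged into one kernel-verified Lean document; each statement's English description precedes it below -/
import Mathlib

section
/- Let n, k ∈ ℕ and let M_0 ⊊ M_1 ⊊ ⋯ ⊊ M_k be a strictly increasing chain of ℤ-submodules of ℤ^n, all having the same rank r with 1 ≤ r ≤ n. Assume that M_0 is generated by a finite collection of vectors all of whose entries have absolute value at most B, where B ≥ 1. Then k ≤ r·log₂ B + (r/2)·log₂ r. -/
/-!
Choose `r` generators `v i ∈ S` and `r` coordinates `t j` such that the minor
`W = (v i (t j))` is nonsingular, and let `π : ℤⁿ → ℤʳ` be the projection onto these coordinates.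
The image `π (M 0)` contains the row lattice of `W`, which has rank `r`, so `π` is injective on
`M k` by rank–nullity. Hence `π` turns the chain into a strictly increasing chain of subgroups of
`ℤʳ` containing the row lattice of `W`, whose index is `|det W|`. Every strict inclusion of
finite-index subgroups at least doubles the index, so `2 ^ k ≤ |det W| ≤ (B √r) ^ r` by
Hadamard's inequality.
-/

open Module Submodule

open EuclideanSpace in
theorem Matrix.abs_det_le_prod_norm_rows {ι : Type*} [Fintype ι] [DecidableEq ι]
    (A : Matrix ι ι ℝ) : |A.det| ≤ ∏ i, ‖WithLp.toLp 2 (A i)‖ := by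
  let e := Fintype.equivFin ι
  let b := EuclideanSpace.basisFun (Fin (Fintype.card ι)) ℝ
  let v i := WithLp.toLp 2 (reindex e e A i)
  have hdet : b.toBasis.det v = A.det := by
    rw [Basis.det_apply, ← det_transpose, ← det_reindex_self e A]
    congr 1
  have hnorm : ∀ i, ‖v i‖ = ‖WithLp.toLp 2 (A (e.symm i))‖ := fun i => by
    simp only [v, EuclideanSpace.norm_eq, reindex_apply, submatrix_apply]
    rw [e.symm.sum_comp (fun j => ‖A (e.symm i) j‖ ^ 2)]
  calc |A.det| ≤ ∏ i, ‖v i‖ := by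
        rw [← hdet, ← b.toBasis.orientation.volumeForm_robust' b]
        exact b.toBasis.orientation.abs_volumeForm_apply_le v
    _ = ∏ i, ‖WithLp.toLp 2 (A i)‖ := by
        simp only [hnorm]
        exact e.symm.prod_comp fun i => ‖WithLp.toLp 2 (A i)‖

theorem Matrix.abs_det_le_of_abs_le {ι : Type*} [Fintype ι] [DecidableEq ι]
    (A : Matrix ι ι ℝ) {B : ℝ} (hA : ∀ i j, |A i j| ≤ B) :
    |A.det| ≤ (B * √(Fintype.card ι)) ^ Fintype.card ι := by
  refine A.abs_det_le_prod_norm_rows.trans ?_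
  calc ∏ i, ‖WithLp.toLp 2 (A i)‖ ≤ ∏ _i : ι, B * √(Fintype.card ι) := by
        gcongr with i
        have hB : 0 ≤ B := (abs_nonneg _).trans (hA i i)
        rw [EuclideanSpace.norm_eq, ← Real.sqrt_sq hB, ← Real.sqrt_mul' _ (Nat.cast_nonneg _)]
        gcongr
        calc ∑ j, ‖A i j‖ ^ 2 ≤ ∑ _j : ι, B ^ 2 := by
              gcongr with j
              rw [Real.norm_eq_abs]
              exact hA i j
          _ = B ^ 2 * Fintype.card ι := by simp [mul_comm]
    _ = (B * √(Fintype.card ι)) ^ Fintype.card ι := by simp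

theorem Matrix.exists_submatrix_det_ne_zero {K m n : Type*} [Field K] [Fintype m] [DecidableEq m]
    [Fintype n] (A : Matrix m n K) (hA : LinearIndependent K A.row) :
    ∃ t : m → n, (A.submatrix id t).det ≠ 0 := by
  have hrank : Fintype.card m = finrank K (span K (Set.range A.col)) := by
    rw [← A.rank_eq_finrank_span_cols, A.rank_eq_finrank_span_row, finrank_span_eq_card hA]
  obtain ⟨f, hf_col, -, hf_li⟩ := exists_fun_fin_finrank_span_eq K (Set.range A.col)
  choose t ht using hf_col
  let e := Fintype.equivFinOfCardEq hrank
  refine ⟨t ∘ e, ?_⟩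
  rw [← det_transpose]
  apply IsUnit.ne_zero
  rw [← isUnit_iff_isUnit_det, ← linearIndependent_rows_iff_isUnit]
  have hcols : (A.submatrix id (t ∘ e)).transpose.row = f ∘ e := by
    ext i j
    simp [← ht]
  rw [hcols]
  exact hf_li.comp e e.injective

theorem exists_mem_det_submatrix_ne_zero {ι : Type*} [Fintype ι] (s : Set (ι → ℤ)) {r : ℕ}
    (hr : finrank ℤ (span ℤ s) = r) : ∃ (v : Fin r → ι → ℤ) (t : Fin r → ι),
      (∀ i, v i ∈ s) ∧ (Matrix.of fun i j => v i (t j)).det ≠ 0 := by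
  let c : (ι → ℤ) →ₗ[ℤ] ι → ℚ := (Algebra.linearMap ℤ ℚ).compLeft ι
  have hc : Function.Injective c := fun x y h => funext fun j => by
    simpa [c] using congrFun h j
  have : Module.Finite ℤ (span ℤ (c '' s)) := by
    rw [← map_span]
    infer_instance
  have hrQ : finrank ℚ (span ℚ (c '' s)) = r := by
    rw [finrank_span_eq_finrank_span ℤ ℚ, ← map_span, ← hr]
    exact (equivMapOfInjective c hc _).finrank_eq.symm
  obtain ⟨f, hf, -, hf_li⟩ := exists_fun_fin_finrank_span_eq ℚ (c '' s)
  let g := f ∘ Fin.cast hrQ.symm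
  choose v hv hcv using fun i => hf (Fin.cast hrQ.symm i)
  obtain ⟨t, ht⟩ := (Matrix.of g).exists_submatrix_det_ne_zero
    (hf_li.comp _ (Fin.cast_injective _))
  refine ⟨v, t, hv, fun h0 => ht ?_⟩
  have hcast : (Matrix.of fun i j => v i (t j)).map (Int.castRingHom ℚ) =
      (Matrix.of g).submatrix id t := by
    ext i j
    simp [g, ← hcv, c]
  rw [← hcast, ← RingHom.mapMatrix_apply, ← RingHom.map_det, h0, map_zero]

theorem Matrix.index_span_rows {ι : Type*} [Fintype ι] [DecidableEq ι] (W : Matrix ι ι ℤ)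
    (hW : W.det ≠ 0) : (span ℤ (Set.range W.row)).toAddSubgroup.index = W.det.natAbs := by
  let bN := Basis.span (Matrix.linearIndependent_rows_of_det_ne_zero hW)
  have hdet : (Pi.basisFun ℤ ι).det ((↑) ∘ bN) = W.det := by
    rw [Pi.basisFun_det]
    congr 1
    ext i
    simp [bN, Basis.span_apply]
  exact (hdet ▸ (span ℤ (Set.range W.row)).natAbs_det_basis_change (Pi.basisFun ℤ ι) bN).symm

theorem AddSubgroup.two_mul_index_le_of_lt {G : Type*} [AddGroup G] {H K : AddSubgroup G}
    (h : H < K) [H.FiniteIndex] : 2 * K.index ≤ H.index := by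
  rw [← relIndex_mul_index h.le]
  refine Nat.mul_le_mul_right _ ?_
  have h0 : H.relIndex K ≠ 0 :=
    left_ne_zero_of_mul (relIndex_mul_index h.le ▸ FiniteIndex.index_ne_zero)
  have h1 : H.relIndex K ≠ 1 := by
    rw [Ne, relIndex_eq_one]
    exact h.not_ge
  omega

theorem AddSubgroup.two_pow_mul_index_le_of_strictMonoOn {G : Type*} [AddGroup G]
    {H : ℕ → AddSubgroup G} {k : ℕ} (hH : StrictMonoOn H (Set.Iic k)) [(H 0).FiniteIndex] :
    2 ^ k * (H k).index ≤ (H 0).index := by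
  induction k with
  | zero => simp
  | succ k ih =>
    have : (H k).FiniteIndex :=
      finiteIndex_of_le (hH.monotoneOn (by simp) (by simp) (Nat.zero_le k))
    calc 2 ^ (k + 1) * (H (k + 1)).index = 2 ^ k * (2 * (H (k + 1)).index) := by ring
      _ ≤ 2 ^ k * (H k).index := by
          gcongr
          exact two_mul_index_le_of_lt (hH (by simp) (by simp) k.lt_succ_self)
      _ ≤ (H 0).index := ih (hH.mono (Set.Iic_subset_Iic.mpr k.le_succ))

theorem Submodule.map_lt_map_of_disjoint_ker {R V N : Type*} [Ring R] [AddCommGroup V]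
    [Module R V] [AddCommGroup N] [Module R N] (f : V →ₗ[R] N) {p q P : Submodule R V}
    (hP : Disjoint P (LinearMap.ker f)) (hpq : p < q) (hqP : q ≤ P) : p.map f < q.map f := by
  refine lt_of_le_of_ne (map_mono hpq.le) fun h => hpq.not_ge fun x hx => ?_
  obtain ⟨y, hy, hyx⟩ : f x ∈ p.map f := h ▸ mem_map_of_mem hx
  have hxy : x - y = 0 := disjoint_def.mp hP _ (sub_mem (hqP hx) (hqP (hpq.le hy)))
    (by simp [hyx])
  rwa [sub_eq_zero.mp hxy]

theorem two_pow_le_index_of_disjoint_ker {R V N : Type*} [Ring R] [AddCommGroup V] [Module R V]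
    [AddCommGroup N] [Module R N] {M : ℕ → Submodule R V} {k : ℕ}
    (hM : StrictMonoOn M (Set.Iic k)) (f : V →ₗ[R] N) (hf : Disjoint (M k) (LinearMap.ker f))
    (L : Submodule R N) (hL : L ≤ (M 0).map f) [L.toAddSubgroup.FiniteIndex] :
    2 ^ k ≤ L.toAddSubgroup.index := by
  have hMk : ∀ {i}, i ≤ k → M i ≤ M k := fun hi => hM.monotoneOn hi Set.self_mem_Iic hi
  let H i := ((M i).map f).toAddSubgroup
  have hH : StrictMonoOn H (Set.Iic k) := fun i hi j hj hij =>
    toAddSubgroup_strictMono (map_lt_map_of_disjoint_ker f hf (hM hi hj hij) (hMk hj))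
  have hLk : L ≤ (M k).map f := hL.trans (map_mono (hMk (Nat.zero_le k)))
  have : (H 0).FiniteIndex := AddSubgroup.finiteIndex_of_le (toAddSubgroup_mono hL)
  have : (H k).FiniteIndex := AddSubgroup.finiteIndex_of_le (toAddSubgroup_mono hLk)
  calc 2 ^ k ≤ 2 ^ k * (H k).index :=
        Nat.le_mul_of_pos_right _ (Nat.pos_of_ne_zero AddSubgroup.FiniteIndex.index_ne_zero)
    _ ≤ (H 0).index := AddSubgroup.two_pow_mul_index_le_of_strictMonoOn hH
    _ ≤ L.toAddSubgroup.index := AddSubgroup.index_antitone (toAddSubgroup_mono hL)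

theorem le_mul_logb_add_of_two_pow_le {k r : ℕ} {B : ℝ} (hB : 0 < B) (hr : 0 < r)
    (h : (2 : ℝ) ^ k ≤ (B * √r) ^ r) :
    (k : ℝ) ≤ r * Real.logb 2 B + r / 2 * Real.logb 2 r := by
  have := Real.logb_le_logb_of_le one_lt_two (by positivity) h
  rwa [Real.logb_pow, Real.logb_pow, Real.logb_self_eq_one one_lt_two, mul_one,
    Real.logb_mul hB.ne' (by positivity), Real.sqrt_eq_rpow, Real.logb_rpow_eq_mul_logb_of_pos
    (by positivity), mul_add, ← mul_assoc, mul_one_div] at this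

theorem chain_length_le_of_bounded_generators_general
    (n k r : ℕ) (B : ℤ) (hB : 1 ≤ B) (hr1 : 1 ≤ r)
    (M : ℕ → Submodule ℤ (Fin n → ℤ))
    (hchain : ∀ i < k, M i < M (i + 1))
    (hrank : ∀ i ≤ k, Module.finrank ℤ (M i) = r)
    (S : Finset (Fin n → ℤ))
    (hgen : M 0 = Submodule.span ℤ (S : Set (Fin n → ℤ)))
    (hbound : ∀ v ∈ S, ∀ j, |v j| ≤ B) :
    (k : ℝ) ≤ (r : ℝ) * Real.logb 2 (B : ℝ) + ((r : ℝ) / 2) * Real.logb 2 (r : ℝ) := by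
  obtain ⟨v, t, hvS, hW⟩ := exists_mem_det_submatrix_ne_zero (S : Set (Fin n → ℤ))
    (hgen ▸ hrank 0 (Nat.zero_le k))
  set W := Matrix.of fun i j => v i (t j)
  let π : (Fin n → ℤ) →ₗ[ℤ] Fin r → ℤ := LinearMap.funLeft ℤ ℤ t
  have hM : StrictMonoOn M (Set.Iic k) := strictMonoOn_Iic_of_lt_succ hchain
  have hL : span ℤ (Set.range W.row) ≤ (M 0).map π := span_le.mpr <| by
    rintro _ ⟨i, rfl⟩
    exact ⟨v i, hgen ▸ subset_span (hvS i), rfl⟩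
  have hπ : Disjoint (M k) (LinearMap.ker π) := disjoint_ker_of_finrank_le π <|
    calc finrank ℤ (M k) = finrank ℤ (span ℤ (Set.range W.row)) := by
          rw [hrank k le_rfl, finrank_span_eq_card (b := W.row)
            (W.linearIndependent_rows_of_det_ne_zero hW), Fintype.card_fin]
      _ ≤ finrank ℤ ((M k).map π) := Submodule.finrank_mono <| hL.trans <|
          map_mono (hM.monotoneOn (Nat.zero_le k) Set.self_mem_Iic (Nat.zero_le k))
  have : (span ℤ (Set.range W.row)).toAddSubgroup.FiniteIndex :=
    ⟨by rw [W.index_span_rows hW]; exact Int.natAbs_ne_zero.mpr hW⟩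
  have h2k : 2 ^ k ≤ W.det.natAbs :=
    W.index_span_rows hW ▸ two_pow_le_index_of_disjoint_ker hM π hπ _ hL
  refine le_mul_logb_add_of_two_pow_le (by exact_mod_cast hB) hr1 ?_
  calc (2 : ℝ) ^ k ≤ W.det.natAbs := by exact_mod_cast h2k
    _ = |(W.det : ℝ)| := (Nat.cast_natAbs W.det).trans Int.cast_abs
    _ = |(W.map (Int.castRingHom ℝ)).det| := congrArg abs (RingHom.map_det (Int.castRingHom ℝ) W)
    _ ≤ (B * √r) ^ r := by
        simpa using (W.map (Int.castRingHom ℝ)).abs_det_le_of_abs_le (B := B)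
          fun i j => by simpa [W, ← Int.cast_abs] using hbound _ (hvS i) (t j)

/-- Let `M 0 ⊊ M 1 ⊊ ⋯ ⊊ M k` be a strictly increasing chain of
`ℤ`-submodules of `ℤ^n`, all of the same rank `r` with `1 ≤ r ≤ n`.  If `M 0` is generated
by a finite collection of vectors whose entries have absolute value at most `B ≥ 1`, then
`k ≤ r·log₂ B + (r/2)·log₂ r`. -/
theorem chain_length_le_of_bounded_generators
    (n k r : ℕ) (B : ℤ) (hB : 1 ≤ B) (hr1 : 1 ≤ r) (hrn : r ≤ n)
    (M : ℕ → Submodule ℤ (Fin n → ℤ))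
    (hchain : ∀ i < k, M i < M (i + 1))
    (hrank : ∀ i ≤ k, Module.finrank ℤ (M i) = r)
    (S : Finset (Fin n → ℤ))
    (hgen : M 0 = Submodule.span ℤ (S : Set (Fin n → ℤ)))
    (hbound : ∀ v ∈ S, ∀ j, |v j| ≤ B) :
    (k : ℝ) ≤ (r : ℝ) * Real.logb 2 (B : ℝ) + ((r : ℝ) / 2) * Real.logb 2 (r : ℝ) :=
  chain_length_le_of_bounded_generators_general n k r B hB hr1 M hchain hrank S hgen hbound
end

section
/- Let n ≥ 1 and b ∈ ℕ, and let e_1 ∈ ℤ^n denote the first standard basis vector. For 0 ≤ i ≤ b define M_i := span_ℤ{2^{b-j}·e_1 : 0 ≤ j ≤ i}. Then M_0 ⊊ M_1 ⊊ ⋯ ⊊ M_b is a strictly increasing chain of ℤ-submodules of ℤ^n, all of rank 1, of length b; moreover M_0 is generated by a vector whose entries have absolute value at most 2^b, so this chain attains the bound k ≤ r·log₂ B + (r/2)·log₂ r with r = 1 and B = 2^b. -/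
lemma chain_span_eq (n b : ℕ) (e1 : Fin n → ℤ) (i : ℕ) (hi : i ≤ b) :
    Submodule.span ℤ {v : Fin n → ℤ | ∃ j ≤ i, v = (2 : ℤ) ^ (b - j) • e1}
      = Submodule.span ℤ {(2 : ℤ) ^ (b - i) • e1} := by
  apply le_antisymm
  · rw [Submodule.span_le]
    rintro v ⟨j, hj, rfl⟩
    have h : (2 : ℤ) ^ (b - j) • e1 = (2 : ℤ) ^ (i - j) • ((2 : ℤ) ^ (b - i) • e1) := by
      rw [smul_smul, ← pow_add]
      have he : i - j + (b - i) = b - j := by omega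
      rw [he]
    rw [h]
    exact Submodule.smul_mem _ _ (Submodule.subset_span rfl)
  · rw [Submodule.span_le]
    rintro v rfl
    exact Submodule.subset_span ⟨i, le_refl i, rfl⟩

lemma finrank_span_singleton_int (n : ℕ) (x : Fin n → ℤ) (hx : ∀ c : ℤ, c • x = 0 → c = 0) :
    Module.finrank ℤ (Submodule.span ℤ {x}) = 1 := by
  have hinj : Function.Injective (LinearMap.toSpanSingleton ℤ (Fin n → ℤ) x) := by
    rw [injective_iff_map_eq_zero]
    intro c hc
    exact hx c hc
  rw [LinearMap.span_singleton_eq_range,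
    LinearMap.finrank_range_of_inj hinj, Module.finrank_self]

/-- For `n ≥ 1`, `b ∈ ℕ`, and `e₁` the first standard basis vector of
`ℤ^n`, the chain `M i := span_ℤ {2^(b-j) • e₁ : j ≤ i}` (for `0 ≤ i ≤ b`) is a strictly
increasing chain of `ℤ`-submodules of `ℤ^n` of length `b`, all of rank `1`, whose initial
module `M 0` is generated by a vector with entries of absolute value at most `2^b`;
moreover the chain attains the bound `k ≤ r·log₂ B + (r/2)·log₂ r` with `r = 1`,
`B = 2^b`, i.e. `b = 1·log₂(2^b) + (1/2)·log₂ 1`. -/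
theorem chain_length_bound_is_tight
    (n : ℕ) (hn : 1 ≤ n) (b : ℕ)
    (e1 : Fin n → ℤ) (he1 : e1 = Pi.single (⟨0, hn⟩ : Fin n) (1 : ℤ))
    (M : ℕ → Submodule ℤ (Fin n → ℤ))
    (hM : ∀ i, M i =
      Submodule.span ℤ {v : Fin n → ℤ | ∃ j ≤ i, v = (2 : ℤ) ^ (b - j) • e1}) :
    (∀ i < b, M i < M (i + 1)) ∧
    (∀ i ≤ b, Module.finrank ℤ (M i) = 1) ∧
    (M 0 = Submodule.span ℤ {(2 : ℤ) ^ b • e1} ∧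
      ∀ j : Fin n, |((2 : ℤ) ^ b • e1) j| ≤ 2 ^ b) ∧
    ((b : ℝ) = 1 * Real.logb 2 ((2 : ℝ) ^ b) + ((1 : ℝ) / 2) * Real.logb 2 1) := by
  have he0 : e1 ⟨0, hn⟩ = 1 := by rw [he1]; simp
  have hMi : ∀ i ≤ b, M i = Submodule.span ℤ {(2 : ℤ) ^ (b - i) • e1} := fun i hi => by
    rw [hM i, chain_span_eq n b e1 i hi]
  refine ⟨?_, ?_, ⟨?_, ?_⟩, ?_⟩
  · intro i hi
    rw [hMi i (by omega), hMi (i + 1) (by omega)]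
    rw [lt_iff_le_and_ne]
    constructor
    · rw [Submodule.span_le]
      rintro v rfl
      have h : (2 : ℤ) ^ (b - i) • e1 = (2 : ℤ) • ((2 : ℤ) ^ (b - (i + 1)) • e1) := by
        rw [smul_smul]
        have : (2 : ℤ) * 2 ^ (b - (i + 1)) = 2 ^ (b - i) := by
          rw [← pow_succ']
          congr 1
          omega
        rw [this]
      rw [h]
      exact Submodule.smul_mem _ _ (Submodule.subset_span rfl)
    · intro hcontra
      have hmem : (2 : ℤ) ^ (b - (i + 1)) • e1 ∈
          Submodule.span ℤ {(2 : ℤ) ^ (b - i) • e1} := by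
        rw [hcontra]; exact Submodule.subset_span rfl
      rw [Submodule.mem_span_singleton] at hmem
      obtain ⟨c, hc⟩ := hmem
      have := congrFun hc ⟨0, hn⟩
      simp only [Pi.smul_apply, smul_eq_mul, he0, mul_one] at this
      have hsplit : (2 : ℤ) ^ (b - i) = 2 * 2 ^ (b - (i + 1)) := by
        rw [← pow_succ']
        congr 1
        omega
      rw [hsplit] at this
      have h2 : (2 * c - 1) * 2 ^ (b - (i + 1)) = 0 := by linear_combination this
      rcases mul_eq_zero.mp h2 with h | h
      · omega
      · exact absurd h (by positivity)
  · intro i hi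
    rw [hMi i hi]
    apply finrank_span_singleton_int n
    intro c hc
    have := congrFun hc ⟨0, hn⟩
    simp only [Pi.smul_apply, smul_eq_mul, he0, mul_one, Pi.zero_apply, smul_smul] at this
    exact (mul_eq_zero.mp this).resolve_right (by positivity)
  · rw [hMi 0 (by omega)]
    simp
  · intro j
    rw [he1]
    rcases eq_or_ne j ⟨0, hn⟩ with rfl | hj
    · simp
    · simp [Pi.single_apply, hj]
  · simp [Real.logb_self_eq_one, Real.logb_pow]
end

section
/- Let n, k ∈ ℕ, let R be a principal ideal domain, and let M = span_R{v_1,…,v_m} be an R-submodule of R^n of rank r ≤ n. Let A be the n×m matrix over R whose i-th column is v_i, and let D_r(A) be a greatest common divisor of all r×r minors of A (which is nonzero since M has rank r). If M ⊊ M_1 ⊊ M_2 ⊊ ⋯ ⊊ M_k is a strictly increasing chain of R-submodules of R^n, all having the same rank r, then k is at most the number of prime factors of D_r(A), counted with multiplicity. -/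
/-!
Write each `M i` as the row span of an `r × n` matrix `U i`, with the rows of `U 0` a basis.
Since `M i ≤ M (i + 1)`, `U i = T i * U (i + 1)` for a square `T i`, and `det (T i)` is not a
unit because an invertible `T i` would make the two row spans equal. Hence `U 0 = T * U k` with
`det T` a product of `k` non-units. The generators `v j` lie in `M 0`, so `Aᵀ = C * T * U k`
and `det T` divides every `r × r` minor of `A`, hence `D`. Finally `D ≠ 0`: the rows of `U 0`
are independent, so over the fraction field `U 0` has a right inverse and, by the vanishing half
of Cauchy–Binet, a nonzero maximal minor; as `U 0 = C' * Aᵀ`, Cauchy–Binet again gives a nonzero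
`r × r` minor of `A`.
-/

open Matrix UniqueFactorizationMonoid Submodule Set

section Factors

variable {α : Type*} [CommMonoidWithZero α] [UniqueFactorizationMonoid α]

theorem card_factors_mul {x y : α} (hx : x ≠ 0) (hy : y ≠ 0) :
    Multiset.card (factors (x * y)) = Multiset.card (factors x) + Multiset.card (factors y) := by
  rw [Multiset.card_eq_card_of_rel (factors_mul hx hy), Multiset.card_add]

theorem card_factors_le_of_dvd {x y : α} (hxy : x ∣ y) (hy : y ≠ 0) :
    Multiset.card (factors x) ≤ Multiset.card (factors y) := by
  obtain ⟨z, rfl⟩ := hxy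
  rw [card_factors_mul (left_ne_zero_of_mul hy) (right_ne_zero_of_mul hy)]
  exact Nat.le_add_right _ _

theorem one_le_card_factors {x : α} (hx : x ≠ 0) (hu : ¬IsUnit x) :
    1 ≤ Multiset.card (factors x) :=
  Multiset.card_pos.2 ((factors_pos hx).2 hu).ne'

end Factors

theorem Submodule.exists_linearIndependent_span_eq {R V : Type*} [CommRing R] [Nontrivial R]
    [AddCommGroup V] [Module R V] (N : Submodule R V) [Module.Free R N] [Module.Finite R N]
    {r : ℕ} (h : Module.finrank R N = r) :
    ∃ u : Fin r → V, LinearIndependent R u ∧ span R (range u) = N := by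
  let b := Module.finBasisOfFinrankEq R N h
  refine ⟨N.subtype ∘ b, b.linearIndependent.map' _ N.ker_subtype, ?_⟩
  rw [range_comp, ← Submodule.map_span, b.span_eq, Submodule.map_top, N.range_subtype]

namespace Matrix

variable {R : Type*} [CommRing R] {ι κ m : Type*}

theorem mem_span_range_row_iff [Fintype κ] {W : Matrix κ m R} {x : m → R} :
    x ∈ span R (range W.row) ↔ ∃ t : κ → R, t ᵥ* W = x := by
  rw [← range_vecMulLinear]
  rfl

theorem span_range_row_mul_le [Fintype κ] (T : Matrix ι κ R) (W : Matrix κ m R) :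
    span R (range (T * W).row) ≤ span R (range W.row) :=
  span_le.2 <| range_subset_iff.2 fun i =>
    mem_span_range_row_iff.2 ⟨T i, (mul_apply_eq_vecMul T W i).symm⟩

theorem exists_mul_eq_of_span_le [Fintype κ] {U : Matrix ι m R} {W : Matrix κ m R}
    (h : span R (range U.row) ≤ span R (range W.row)) : ∃ T : Matrix ι κ R, T * W = U := by
  choose T hT using fun i => mem_span_range_row_iff.1 (h (subset_span ⟨i, rfl⟩))
  exact ⟨of T, ext fun i j => by rw [mul_apply_eq_vecMul]; exact congrFun (hT i) j⟩

theorem not_isUnit_det_of_span_lt [Fintype κ] [DecidableEq κ] {T : Matrix κ κ R}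
    {W : Matrix κ m R} (h : span R (range (T * W).row) < span R (range W.row)) :
    ¬IsUnit T.det := fun hT => h.not_ge <| by
  simpa [← Matrix.mul_assoc, nonsing_inv_mul T hT] using span_range_row_mul_le T⁻¹ (T * W)

theorem det_dvd_det_submatrix_mul_mul [Fintype ι] [DecidableEq ι] [Fintype κ]
    (X : Matrix κ ι R) (T : Matrix ι ι R) (Y : Matrix ι m R) (rs : ι → κ) (cs : ι → m) :
    T.det ∣ ((X * T * Y).submatrix rs cs).det := by
  rw [submatrix_mul _ _ _ id _ Function.bijective_id, submatrix_mul _ _ _ id _ Function.bijective_id,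
    submatrix_id_id, det_mul, det_mul]
  exact dvd_mul_of_dvd_left (dvd_mul_left _ _) _

theorem det_mul_eq_zero_of_forall_det_submatrix_eq_zero [Fintype ι] [DecidableEq ι] [Fintype κ]
    (X : Matrix ι κ R) (Y : Matrix κ ι R) (h : ∀ rs : ι → κ, (Y.submatrix rs id).det = 0) :
    (X * Y).det = 0 := by
  have hrows : X * Y = fun i => ∑ c, X i c • Y c := by
    ext i j
    simp [mul_apply, Finset.sum_apply]
  have hdet := (detRowAlternating : (ι → R) [⋀^ι]→ₗ[R] R).toMultilinearMap.map_sum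
    fun i c => X i c • Y c
  simp only [AlternatingMap.coe_multilinearMap, AlternatingMap.map_smul_univ] at hdet
  rw [det, hrows, hdet]
  exact Finset.sum_eq_zero fun rs _ => by rw [show detRowAlternating (fun i => Y (rs i)) = 0 from h rs, smul_zero]


theorem exists_mul_eq_one_of_linearIndependent {K : Type*} [Field K] [Fintype ι] [DecidableEq ι]
    [Fintype m] {U : Matrix ι m K} (hU : LinearIndependent K U.row) :
    ∃ Y : Matrix m ι K, U * Y = 1 := by
  rw [← mulVec_surjective_iff_exists_right_inverse]
  have hrank := hU.rank_matrix
  rw [rank, ← Module.finrank_fintype_fun_eq_card (R := K)] at hrank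
  exact LinearMap.range_eq_top.1 (Submodule.eq_top_of_finrank_eq hrank)

theorem exists_det_submatrix_ne_zero_of_linearIndependent [IsDomain R] [Fintype ι] [DecidableEq ι] [Fintype m]
    {U : Matrix ι m R} (hU : LinearIndependent R U.row) :
    ∃ cs : ι → m, (U.submatrix id cs).det ≠ 0 := by
  let K := FractionRing R
  let f : (m → R) →ₗ[R] (m → K) := LinearMap.compLeft (Algebra.linearMap R K) m
  have hf : Function.Injective f := fun x y hxy =>
    funext fun j => IsFractionRing.injective R K (congrFun hxy j)
  have hUK : LinearIndependent K (U.map (algebraMap R K)).row :=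
    (LinearIndependent.iff_fractionRing R K).1 (hU.map' f (LinearMap.ker_eq_bot.2 hf))
  obtain ⟨Y, hY⟩ := exists_mul_eq_one_of_linearIndependent hUK
  by_contra! h
  have hdet : (U.map (algebraMap R K) * Y).det = 1 := by rw [hY, det_one]
  rw [← det_transpose, transpose_mul] at hdet
  refine one_ne_zero (hdet.symm.trans ?_)
  refine det_mul_eq_zero_of_forall_det_submatrix_eq_zero _ _ fun cs => ?_
  rw [← transpose_submatrix, det_transpose, submatrix_map, ← RingHom.mapMatrix_apply,
    ← RingHom.map_det, h cs, map_zero]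


theorem exists_det_submatrix_ne_zero_of_span_le [IsDomain R] [Fintype ι] [DecidableEq ι]
    [Fintype κ] [Fintype m] {U : Matrix ι m R} (hU : LinearIndependent R U.row)
    {W : Matrix κ m R} (h : span R (range U.row) ≤ span R (range W.row)) :
    ∃ (rs : ι → κ) (cs : ι → m), (W.submatrix rs cs).det ≠ 0 := by
  obtain ⟨C, hC⟩ := exists_mul_eq_of_span_le h
  obtain ⟨cs, hcs⟩ := exists_det_submatrix_ne_zero_of_linearIndependent hU
  by_contra! hW
  refine hcs ?_
  rw [← hC, submatrix_mul _ _ _ id _ Function.bijective_id, submatrix_id_id]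
  exact det_mul_eq_zero_of_forall_det_submatrix_eq_zero _ _ fun rs => hW rs cs

end Matrix

section Chain

variable {R : Type*} [CommRing R] [UniqueFactorizationMonoid R]
  {ι m : Type*} [Fintype ι] [DecidableEq ι]

theorem exists_eq_mul_le_card_factors_det {U : ℕ → Matrix ι m R} {k : ℕ}
    (hU : ∀ i < k, span R (range (U i).row) < span R (range (U (i + 1)).row)) :
    ∃ T : Matrix ι ι R, U 0 = T * U k ∧ (T.det ≠ 0 → k ≤ Multiset.card (factors T.det)) := by
  induction k with
  | zero => exact ⟨1, (Matrix.one_mul _).symm, fun _ => Nat.zero_le _⟩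
  | succ k ih =>
    obtain ⟨T, hT, hT_card⟩ := ih fun i hi => hU i (Nat.lt_succ_of_lt hi)
    have hlt := hU k k.lt_succ_self
    obtain ⟨S, hS⟩ := exists_mul_eq_of_span_le hlt.le
    have hS_unit : ¬IsUnit S.det := not_isUnit_det_of_span_lt (hS ▸ hlt)
    refine ⟨T * S, by rw [hT, ← hS, Matrix.mul_assoc], fun hTS => ?_⟩
    rw [det_mul] at hTS ⊢
    have hT0 := left_ne_zero_of_mul hTS
    have hS0 := right_ne_zero_of_mul hTS
    rw [card_factors_mul hT0 hS0]
    exact Nat.add_le_add (hT_card hT0) (one_le_card_factors hS0 hS_unit)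

end Chain

theorem chain_length_le_prime_factors_general
    {R : Type*} [CommRing R] [IsDomain R] [IsPrincipalIdealRing R]
    (n m k r : ℕ)
    (v : Fin m → (Fin n → R))
    (A : Matrix (Fin n) (Fin m) R) (hA : ∀ i j, A i j = v j i)
    (D : R)
    (hDdvd : ∀ (rs : Fin r → Fin n) (cs : Fin r → Fin m),
      D ∣ (A.submatrix rs cs).det)
    (hDgcd : ∀ d : R,
      (∀ (rs : Fin r → Fin n) (cs : Fin r → Fin m), d ∣ (A.submatrix rs cs).det) →
      d ∣ D)
    (M : ℕ → Submodule R (Fin n → R))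
    (hM0 : M 0 = Submodule.span R (Set.range v))
    (hchain : ∀ i < k, M i < M (i + 1))
    (hrank : ∀ i ≤ k, Module.finrank R (M i) = r) :
    k ≤ Multiset.card (UniqueFactorizationMonoid.factors D) := by
  have hgen : ∀ i ≤ k, ∃ U : Matrix (Fin r) (Fin n) R,
      LinearIndependent R U.row ∧ span R (range U.row) = M i :=
    fun i hi => (M i).exists_linearIndependent_span_eq (hrank i hi)
  choose! U hU_indep hU_span using hgen
  obtain ⟨T, hT, hT_card⟩ := exists_eq_mul_le_card_factors_det (U := U) fun i hi => by
    rw [hU_span i hi.le, hU_span (i + 1) hi]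
    exact hchain i hi
  have hAv : Aᵀ.row = v := funext₂ fun j i => hA i j
  have hspan : span R (range (U 0).row) = span R (range Aᵀ.row) := by
    rw [hU_span 0 k.zero_le, hM0, hAv]
  obtain ⟨C, hC⟩ := exists_mul_eq_of_span_le hspan.ge
  have hTD : T.det ∣ D := hDgcd _ fun rs cs => by
    rw [← det_transpose (A.submatrix rs cs), transpose_submatrix, ← hC, hT, ← Matrix.mul_assoc]
    exact det_dvd_det_submatrix_mul_mul _ _ _ _ _
  have hD : D ≠ 0 := by
    obtain ⟨cs, rs, hminor⟩ :=
      exists_det_submatrix_ne_zero_of_span_le (hU_indep 0 k.zero_le) hspan.le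
    rintro rfl
    exact hminor (by simpa [← transpose_submatrix] using hDdvd rs cs)
  calc k ≤ Multiset.card (factors T.det) := hT_card (ne_zero_of_dvd_ne_zero hD hTD)
    _ ≤ Multiset.card (factors D) := card_factors_le_of_dvd hTD hD

/-- Let `R` be a PID, `M = span_R {v 0, …, v (m-1)}` a submodule of
`R^n` of rank `r ≤ n`, `A` the `n × m` matrix whose columns are the generators `v i`,
and `D` a gcd of all `r × r` minors of `A`.  For any strictly increasing chain
`M ⊊ M 1 ⊊ ⋯ ⊊ M k` of `R`-submodules of `R^n` all of rank `r`, `k` is at most the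
number of prime factors of `D`, counted with multiplicity. -/
theorem chain_length_le_prime_factors
    {R : Type*} [CommRing R] [IsDomain R] [IsPrincipalIdealRing R]
    (n m k r : ℕ) (hrn : r ≤ n)
    (v : Fin m → (Fin n → R))
    (A : Matrix (Fin n) (Fin m) R) (hA : ∀ i j, A i j = v j i)
    (D : R)
    (hDdvd : ∀ (rs : Fin r → Fin n) (cs : Fin r → Fin m),
      D ∣ (A.submatrix rs cs).det)
    (hDgcd : ∀ d : R,
      (∀ (rs : Fin r → Fin n) (cs : Fin r → Fin m), d ∣ (A.submatrix rs cs).det) →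
      d ∣ D)
    (M : ℕ → Submodule R (Fin n → R))
    (hM0 : M 0 = Submodule.span R (Set.range v))
    (hchain : ∀ i < k, M i < M (i + 1))
    (hrank : ∀ i ≤ k, Module.finrank R (M i) = r) :
    k ≤ Multiset.card (UniqueFactorizationMonoid.factors D) :=
  chain_length_le_prime_factors_general n m k r v A hA D hDdvd hDgcd M hM0 hchain hrank
end

section
/- Let A = (α, μ, β) be a P-finite automaton of dimension n over Σ and let S ⊆ ℚ[x]^n be a finite generating set of the backward module of A. Then f_A is identically zero if and only if α·v(1) = 0 for every v ∈ S, where v(1) ∈ ℚ^n denotes the vector obtained by evaluating every entry of v at x = 1. -/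
open Polynomial Matrix

/-- Substitute `x + k` for `x` in a polynomial. -/
noncomputable def shiftP (k : ℕ) (p : Polynomial ℚ) : Polynomial ℚ :=
  p.comp (Polynomial.X + Polynomial.C (k : ℚ))

/-- The extension of the transition map `μ` of a P-finite automaton to words:
`μ(σ₁⋯σₖ)(x) = μ(σ₁)(x)·μ(σ₂)(x+1)⋯μ(σₖ)(x+k-1)`, so that
`μ(ε)(x) = I` and `μ(wσ)(x) = μ(w)(x)·μ(σ)(x+|w|)`. -/
noncomputable def muWord {S ι : Type*} [Fintype ι] [DecidableEq ι]
    (μ : S → Matrix ι ι (Polynomial ℚ)) (w : List S) : Matrix ι ι (Polynomial ℚ) :=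
  (w.zipIdx.map (fun p => (μ p.1).map (shiftP p.2))).prod

/-- The function computed by the P-finite automaton `(α, μ, β)`:
`f_A(w) = α·μ(w,1)·β(|w|+1)`. -/
noncomputable def fAut {S ι : Type*} [Fintype ι] [DecidableEq ι]
    (α : ι → ℚ) (μ : S → Matrix ι ι (Polynomial ℚ)) (β : ι → Polynomial ℚ)
    (w : List S) : ℚ :=
  α ⬝ᵥ ((muWord μ w).map (Polynomial.eval (1 : ℚ))).mulVec
      (fun i => (β i).eval ((w.length : ℚ) + 1))

/-- The backward function of a P-finite automaton: `B_A(u)(x) = μ(u)(x)·β(x+|u|)`. -/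
noncomputable def backF {S ι : Type*} [Fintype ι] [DecidableEq ι]
    (μ : S → Matrix ι ι (Polynomial ℚ)) (β : ι → Polynomial ℚ)
    (w : List S) : ι → Polynomial ℚ :=
  (muWord μ w).mulVec (fun i => shiftP w.length (β i))

/-! Since `f_A(w) = α · B_A(w)(1)`, zeroness of `f_A` says that every backward vector satisfies
the condition `α · v(1) = 0`. This condition cuts out a `ℚ[x]`-submodule, so it holds on the
backward module as soon as it holds on a generating set. -/

section

variable {ι : Type*} [Fintype ι]

theorem eval_shiftP (k : ℕ) (p : ℚ[X]) (a : ℚ) : (shiftP k p).eval a = p.eval (a + k) := by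
  simp [shiftP]

-- `α ⬝ᵥ v(1) = 0` iff `∑ i, α i • v i` lies in the ideal `ker (eval 1)`, a `ℚ[x]`-submodule.
noncomputable def orthogonalAtOne (α : ι → ℚ) : Submodule ℚ[X] (ι → ℚ[X]) :=
  Submodule.comap (Fintype.linearCombination ℚ[X] fun i => C (α i)) (RingHom.ker (evalRingHom 1))

theorem mem_orthogonalAtOne {α : ι → ℚ} {v : ι → ℚ[X]} :
    v ∈ orthogonalAtOne α ↔ (α ⬝ᵥ fun i => (v i).eval 1) = 0 := by
  simp [orthogonalAtOne, Fintype.linearCombination_apply, dotProduct, mul_comm]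

variable [DecidableEq ι] {S : Type*}

theorem fAut_eq_dotProduct_backF_eval_one (α : ι → ℚ) (μ : S → Matrix ι ι ℚ[X])
    (β : ι → ℚ[X]) (w : List S) :
    fAut α μ β w = α ⬝ᵥ fun i => (backF μ β w i).eval 1 := by
  simp [fAut, backF, mulVec, dotProduct, eval_finsetSum, eval_shiftP, add_comm]

theorem fAut_eq_zero_iff_range_backF_subset (α : ι → ℚ) (μ : S → Matrix ι ι ℚ[X])
    (β : ι → ℚ[X]) :
    (∀ w, fAut α μ β w = 0) ↔ Set.range (backF μ β) ⊆ orthogonalAtOne α := by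
  simp only [Set.range_subset_iff, SetLike.mem_coe, mem_orthogonalAtOne,
    fAut_eq_dotProduct_backF_eval_one]

end

theorem zeroness_iff_orthogonal_to_backward_generators_general
    {S : Type*} (n : ℕ)
    (α : Fin n → ℚ) (μ : S → Matrix (Fin n) (Fin n) (Polynomial ℚ))
    (β : Fin n → Polynomial ℚ)
    (G : Finset (Fin n → Polynomial ℚ))
    (hG : Submodule.span (Polynomial ℚ) (G : Set (Fin n → Polynomial ℚ))
        = Submodule.span (Polynomial ℚ) (Set.range (backF μ β))) :
    (∀ w : List S, fAut α μ β w = 0) ↔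
      (∀ v ∈ G, (α ⬝ᵥ fun i => (v i).eval (1 : ℚ)) = 0) := by
  calc (∀ w, fAut α μ β w = 0)
      ↔ Submodule.span ℚ[X] (Set.range (backF μ β)) ≤ orthogonalAtOne α := by
        rw [Submodule.span_le, fAut_eq_zero_iff_range_backF_subset]
    _ ↔ Submodule.span ℚ[X] (G : Set (Fin n → ℚ[X])) ≤ orthogonalAtOne α := by rw [hG]
    _ ↔ ∀ v ∈ G, (α ⬝ᵥ fun i => (v i).eval 1) = 0 := by
        simp only [Submodule.span_le, Set.subset_def, SetLike.mem_coe,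
          mem_orthogonalAtOne]

/-- If `G` is a finite generating set of the backward module of a
P-finite automaton `A = (α, μ, β)`, then `f_A ≡ 0` iff `α·v(1) = 0` for every `v ∈ G`. -/
theorem zeroness_iff_orthogonal_to_backward_generators
    {S : Type*} [Fintype S] (n : ℕ)
    (α : Fin n → ℚ) (μ : S → Matrix (Fin n) (Fin n) (Polynomial ℚ))
    (β : Fin n → Polynomial ℚ)
    (G : Finset (Fin n → Polynomial ℚ))
    (hG : Submodule.span (Polynomial ℚ) (G : Set (Fin n → Polynomial ℚ))
        = Submodule.span (Polynomial ℚ) (Set.range (backF μ β))) :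
    (∀ w : List S, fAut α μ β w = 0) ↔
      (∀ v ∈ G, (α ⬝ᵥ fun i => (v i).eval (1 : ℚ)) = 0) :=
  zeroness_iff_orthogonal_to_backward_generators_general n α μ β G hG
end

section
/- Let A = (α, μ, β) be a P-finite automaton of dimension n over Σ and let W ⊆ Σ* be a finite set of words with ε ∈ W. Suppose that for every σ ∈ Σ and u ∈ W, B_A(σu) lies in the ℚ(x)-linear span of {B_A(u') : u' ∈ W} (inside ℚ(x)^n, viewing ℚ[x]^n ⊆ ℚ(x)^n). Then for every word w ∈ Σ*, B_A(w) lies in the ℚ(x)-linear span of {B_A(u) : u ∈ W}. -/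
open Polynomial Matrix

/-- The embedding of `ℚ[x]^n` into `ℚ(x)^n`. -/
noncomputable def embRat {n : ℕ} (v : Fin n → Polynomial ℚ) : Fin n → RatFunc ℚ :=
  fun i => algebraMap (Polynomial ℚ) (RatFunc ℚ) (v i)

/-! Prepending a letter `σ` acts on backward vectors as `v(x) ↦ μ(σ)(x)·v(x + 1)`, a map that is
semilinear over the automorphism `x ↦ x + 1` of `ℚ(x)`. A semilinear map sending the generators
of a span into it preserves the span, so induction on `w`, starting from `B_A(ε)`, concludes. -/

theorem shiftP_eq_taylor (k : ℕ) (p : ℚ[X]) : shiftP k p = taylor (k : ℚ) p :=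
  (taylor_apply ..).symm

theorem shiftP_zero : shiftP 0 = id :=
  funext fun p => by rw [shiftP_eq_taylor, Nat.cast_zero, taylor_zero, id]

theorem shiftP_one_shiftP (k : ℕ) (p : ℚ[X]) : shiftP 1 (shiftP k p) = shiftP (k + 1) p := by
  simp only [shiftP_eq_taylor, taylor_taylor]
  push_cast
  rw [add_comm]

noncomputable def polyShift : ℚ[X] ≃+* ℚ[X] := (taylorEquiv (1 : ℚ)).toRingEquiv

theorem polyShift_apply (p : ℚ[X]) : polyShift p = shiftP 1 p := by
  rw [shiftP_eq_taylor, Nat.cast_one]; rfl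

section Words

variable {S ι : Type*} [Fintype ι] [DecidableEq ι] (μ : S → Matrix ι ι ℚ[X])

theorem muWord_cons (σ : S) (w : List S) :
    muWord μ (σ :: w) = μ σ * (muWord μ w).map (shiftP 1) := by
  have hmap : (muWord μ w).map (shiftP 1) = polyShift.toRingHom.mapMatrix (muWord μ w) :=
    Matrix.ext fun i j => (polyShift_apply _).symm
  rw [hmap]
  unfold muWord
  rw [map_list_prod, List.zipIdx_cons, List.zipIdx_succ, List.map_cons, List.prod_cons]
  simp only [shiftP_zero, Matrix.map_id, List.map_map, Function.comp_def, RingHom.mapMatrix_apply,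
    Matrix.map_map, RingEquiv.toRingHom_eq_coe, RingHom.coe_coe, polyShift_apply, shiftP_one_shiftP]

theorem backF_cons (β : ι → ℚ[X]) (σ : S) (w : List S) :
    backF μ β (σ :: w) = μ σ *ᵥ fun i => shiftP 1 (backF μ β w i) := by
  have hshift : ((muWord μ w).map (shiftP 1) *ᵥ fun i => shiftP (w.length + 1) (β i)) =
      fun i => shiftP 1 (backF μ β w i) := by
    funext i
    have h := RingHom.map_mulVec polyShift.toRingHom (muWord μ w) (fun j => shiftP w.length (β j)) i
    simp only [RingEquiv.toRingHom_eq_coe, RingHom.coe_coe, polyShift_apply, Function.comp_def,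
      shiftP_one_shiftP] at h
    exact h.symm
  rw [backF, muWord_cons, ← Matrix.mulVec_mulVec, List.length_cons, hshift]

end Words

noncomputable def ratShift : RatFunc ℚ ≃+* RatFunc ℚ :=
  IsFractionRing.ringEquivOfRingEquiv polyShift

theorem ratShift_algebraMap (p : ℚ[X]) :
    ratShift (algebraMap ℚ[X] (RatFunc ℚ) p) = algebraMap ℚ[X] (RatFunc ℚ) (shiftP 1 p) := by
  rw [ratShift, IsFractionRing.ringEquivOfRingEquiv_algebraMap, polyShift_apply]

noncomputable def shiftMulVec {ι : Type*} [Fintype ι] (M : Matrix ι ι ℚ[X]) :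
    (ι → RatFunc ℚ) →ₛₗ[(ratShift : RatFunc ℚ →+* RatFunc ℚ)] (ι → RatFunc ℚ) where
  toFun v := M.map (algebraMap ℚ[X] (RatFunc ℚ)) *ᵥ fun i => ratShift (v i)
  map_add' v w := by simp only [Pi.add_apply, map_add, ← Matrix.mulVec_add]; rfl
  map_smul' c v := by
    simp only [Pi.smul_apply, smul_eq_mul, map_mul]
    rw [← Matrix.mulVec_smul]
    rfl

theorem embRat_backF_cons {S : Type*} {n : ℕ} (μ : S → Matrix (Fin n) (Fin n) ℚ[X])
    (β : Fin n → ℚ[X]) (σ : S) (w : List S) :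
    embRat (backF μ β (σ :: w)) = shiftMulVec (μ σ) (embRat (backF μ β w)) := by
  funext i
  simp only [embRat, backF_cons, RingHom.map_mulVec, shiftMulVec, LinearMap.coe_mk, AddHom.coe_mk,
    ratShift_algebraMap]
  rfl

theorem backward_vectors_in_ratfunc_span_general
    {S : Type*} (n : ℕ)
    (μ : S → Matrix (Fin n) (Fin n) (Polynomial ℚ))
    (β : Fin n → Polynomial ℚ)
    (W : Finset (List S)) (hW : ([] : List S) ∈ W)
    (hclosed : ∀ (σ : S), ∀ u ∈ W,
      embRat (backF μ β (σ :: u)) ∈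
        Submodule.span (RatFunc ℚ)
          ((fun u' => embRat (backF μ β u')) '' (W : Set (List S)))) :
    ∀ w : List S,
      embRat (backF μ β w) ∈
        Submodule.span (RatFunc ℚ)
          ((fun u' => embRat (backF μ β u')) '' (W : Set (List S))) := by
  set V := Submodule.span (RatFunc ℚ) ((fun u' => embRat (backF μ β u')) '' (W : Set (List S)))
  have hstable (σ : S) : V ≤ V.comap (shiftMulVec (μ σ)) := Submodule.span_le.2 <| by
    rintro _ ⟨u, hu, rfl⟩
    rw [SetLike.mem_coe, Submodule.mem_comap, ← embRat_backF_cons]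
    exact hclosed σ u hu
  intro w
  induction w with
  | nil => exact Submodule.subset_span ⟨[], hW, rfl⟩
  | cons σ w ih =>
    rw [embRat_backF_cons]
    exact hstable σ ih

/-- Let `W` be a finite set of words containing `ε`.  If for every
letter `σ` and every `u ∈ W` the vector `B_A(σu)` lies in the `ℚ(x)`-linear span of
`{B_A(u') : u' ∈ W}` (inside `ℚ(x)^n`), then `B_A(w)` lies in that span for every
word `w`. -/
theorem backward_vectors_in_ratfunc_span
    {S : Type*} [Fintype S] (n : ℕ)
    (α : Fin n → ℚ) (μ : S → Matrix (Fin n) (Fin n) (Polynomial ℚ))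
    (β : Fin n → Polynomial ℚ)
    (W : Finset (List S)) (hW : ([] : List S) ∈ W)
    (hclosed : ∀ (σ : S), ∀ u ∈ W,
      embRat (backF μ β (σ :: u)) ∈
        Submodule.span (RatFunc ℚ)
          ((fun u' => embRat (backF μ β u')) '' (W : Set (List S)))) :
    ∀ w : List S,
      embRat (backF μ β w) ∈
        Submodule.span (RatFunc ℚ)
          ((fun u' => embRat (backF μ β u')) '' (W : Set (List S))) :=
  backward_vectors_in_ratfunc_span_general n μ β W hW hclosed
end

section
/- Let f : Σ* → ℚ, let R = [r_1,…,r_m] and C = [c_1,…,c_n] be finite sequences of words, and let d ∈ ℕ. If the m×(d+1)n matrix A(R,C,d) has full row rank (rank m), then the table H(R,C) is d-closed: for every σ ∈ Σ there exists a matrix M_σ(x) ∈ ℚ[x]^{n×n} whose entries all have degree at most d such that row_C(rσ) = row_C(r)·M_σ(|r|+1) for every r ∈ R. -/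
open Polynomial Matrix


/-- The row of the table `H(R,C)` associated to a word `w`:
`row_C(w) = (f(w c₁), …, f(w cₙ))`. -/
noncomputable def tableRow {S : Type*} (f : List S → ℚ) {n : ℕ} (C : Fin n → List S)
    (w : List S) : Fin n → ℚ := fun j => f (w ++ C j)

/-- The matrix `A(R,C,d) = [Δ⁰H(R,C) | Δ¹H(R,C) | ⋯ | ΔᵈH(R,C)]`, an
`m × (d+1)n` matrix with columns indexed by `Fin (d+1) × Fin n`, where
`Δ = diag(|r₁|+1, …, |rₘ|+1)` and `H(R,C)ᵢⱼ = f(rᵢcⱼ)`. -/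
noncomputable def tableA {S : Type*} (f : List S → ℚ) {m n : ℕ}
    (R : Fin m → List S) (C : Fin n → List S) (d : ℕ) :
    Matrix (Fin m) (Fin (d + 1) × Fin n) ℚ :=
  fun i p => ((R i).length + 1 : ℚ) ^ (p.1 : ℕ) * f (R i ++ C p.2)

/-! Since `A(R,C,d)` has full row rank, `A(R,C,d) y = col_R(σ c_j)` has a solution `y` for each
`j`. Reading the coefficient `y (k, j')` of the column block `Δᵏ H` as the coefficient of `xᵏ`
in `M_σ(x)_{j' j}` gives the required matrix, because row `i` of `A(R,C,d)` is `row_C(rᵢ)`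
tensored with the powers of `|rᵢ| + 1`. -/
theorem Matrix.mulVec_surjective_of_rank_eq_card {K m n : Type*} [Field K] [Fintype m]
    [Fintype n] {A : Matrix m n K} (hA : A.rank = Fintype.card m) :
    Function.Surjective A.mulVec := by
  have : LinearMap.range A.mulVecLin = ⊤ :=
    Submodule.eq_top_of_finrank_eq (by rw [← Matrix.rank, hA, Module.finrank_fintype_fun_eq_card])
  exact LinearMap.range_eq_top.mp this

section PowerRow

variable {K : Type*} [CommRing K] {n d : ℕ}

def powerRow (d : ℕ) (x : K) (u : Fin n → K) : Fin (d + 1) × Fin n → K :=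
  fun p => x ^ (p.1 : ℕ) * u p.2

noncomputable def polyOfCoeffs (v : Fin (d + 1) × Fin n → K) (j : Fin n) : K[X] :=
  ∑ k : Fin (d + 1), C (v (k, j)) * X ^ (k : ℕ)

theorem natDegree_polyOfCoeffs_le (v : Fin (d + 1) × Fin n → K) (j : Fin n) :
    (polyOfCoeffs v j).natDegree ≤ d :=
  natDegree_sum_le_of_forall_le _ _ fun k _ =>
    (natDegree_C_mul_X_pow_le _ _).trans (Nat.lt_succ_iff.mp k.2)

theorem powerRow_dotProduct (x : K) (u : Fin n → K) (v : Fin (d + 1) × Fin n → K) :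
    powerRow d x u ⬝ᵥ v = u ⬝ᵥ fun j => (polyOfCoeffs v j).eval x := by
  simp only [dotProduct, powerRow, polyOfCoeffs, Fintype.sum_prod_type, eval_finsetSum,
    eval_mul, eval_C, eval_pow, eval_X, Finset.mul_sum]
  rw [Finset.sum_comm]
  exact Finset.sum_congr rfl fun _ _ => Finset.sum_congr rfl fun _ _ => by ring

end PowerRow

theorem tableA_row {S : Type*} (f : List S → ℚ) {m n : ℕ} (R : Fin m → List S)
    (C : Fin n → List S) (d : ℕ) (i : Fin m) :
    tableA f R C d i = powerRow d ((R i).length + 1 : ℚ) (tableRow f C (R i)) :=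
  rfl

theorem full_row_rank_implies_d_closed_general
    {S : Type*} (f : List S → ℚ) (m n d : ℕ)
    (R : Fin m → List S) (C : Fin n → List S)
    (hrank : (tableA f R C d).rank = m) :
    ∀ σ : S, ∃ M : Matrix (Fin n) (Fin n) (Polynomial ℚ),
      (∀ i j, (M i j).natDegree ≤ d) ∧
      ∀ i : Fin m,
        Matrix.vecMul (tableRow f C (R i))
            (M.map (Polynomial.eval (((R i).length : ℚ) + 1)))
          = tableRow f C (R i ++ [σ]) := by
  intro σ
  have hsurj := Matrix.mulVec_surjective_of_rank_eq_card (hrank.trans (Fintype.card_fin m).symm)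
  choose y hy using fun j => hsurj fun i => f (R i ++ [σ] ++ C j)
  refine ⟨Matrix.of fun j' j => polyOfCoeffs (y j) j',
    fun j' j => natDegree_polyOfCoeffs_le (y j) j', fun i => funext fun j => ?_⟩
  calc vecMul (tableRow f C (R i)) ((Matrix.of fun j' j => polyOfCoeffs (y j) j').map
          (eval ((R i).length + 1 : ℚ))) j
      = tableA f R C d i ⬝ᵥ y j := by rw [tableA_row, powerRow_dotProduct]; rfl
    _ = f (R i ++ [σ] ++ C j) := congrFun (hy j) i
    _ = tableRow f C (R i ++ [σ]) j := rfl

/-- If the `m × (d+1)n` matrix `A(R,C,d)` has full row rank `m`,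
then the table `H(R,C)` is `d`-closed: for every `σ` there is a matrix
`M_σ(x) ∈ ℚ[x]^{n×n}` with entries of degree at most `d` such that
`row_C(rσ) = row_C(r)·M_σ(|r|+1)` for every `r ∈ R`. -/
theorem full_row_rank_implies_d_closed
    {S : Type*} [Fintype S] (f : List S → ℚ) (m n d : ℕ)
    (R : Fin m → List S) (C : Fin n → List S)
    (hrank : (tableA f R C d).rank = m) :
    ∀ σ : S, ∃ M : Matrix (Fin n) (Fin n) (Polynomial ℚ),
      (∀ i j, (M i j).natDegree ≤ d) ∧
      ∀ i : Fin m,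
        Matrix.vecMul (tableRow f C (R i))
            (M.map (Polynomial.eval (((R i).length : ℚ) + 1)))
          = tableRow f C (R i ++ [σ]) :=
  full_row_rank_implies_d_closed_general f m n d R C hrank
end

section
/- Let f : Σ* → ℚ, let d ∈ ℕ, and let R = [r_1,…,r_m] and C = [c_1,…,c_n] be sequences of words such that A(R,C,d) has full row rank. Let A_H = (α, μ, β) be an automaton associated to the d-closed table H(R,C). Let u ∈ Σ* and σ ∈ Σ be such that A_H is correct on u but not correct on uσ, and let c_j be the j-th word of C such that f(uσc_j) ≠ α·μ(uσ,1)·e_j. Set R' := R·[u] (the sequence R with u appended). Then the (m+1)×((d+1)n+1) matrix [A(R',C,d) | col_{R'}(σc_j)] has full row rank. -/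
open Polynomial Matrix

/-!
A dependency among the rows of the new matrix must, since the rows of `A(R,C,d)` are
independent, write the row of `u` as a combination `∑ λᵢ · (row of rᵢ)`. In the columns
`ΔᵏH` (`k ≤ d`) this reads `(|u|+1)ᵏ·row_C(u) = ∑ λᵢ (|rᵢ|+1)ᵏ·row_C(rᵢ)`, and hence
`p(|u|+1)·row_C(u) = ∑ λᵢ p(|rᵢ|+1)·row_C(rᵢ)` for every polynomial `p` of degree `≤ d`.
Applied to the entries of `M_σ` and combined with closedness and correctness on `u`, this gives
`α·μ(uσ,1) = ∑ λᵢ row_C(rᵢσ)`, while the extra column gives `f(uσc_j) = ∑ λᵢ f(rᵢσc_j)`: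
so `f(uσc_j) = (α·μ(uσ,1))_j`, contrary to the choice of `c_j`.
-/

namespace Polynomial

variable {K V ι : Type*} [CommRing K] [AddCommGroup V] [Module K V] [Fintype ι]

theorem eval_smul_eq_sum_of_pow_smul {d : ℕ} {a : K} {x : V} {b c : ι → K} {y : ι → V}
    (h : ∀ k ≤ d, a ^ k • x = ∑ i, c i • b i ^ k • y i) {p : K[X]} (hp : p.natDegree ≤ d) :
    p.eval a • x = ∑ i, c i • p.eval (b i) • y i := by
  have hd : p.natDegree < d + 1 := Nat.lt_succ_of_le hp
  simp_rw [eval_eq_sum_range' hd, Finset.sum_smul, mul_smul, Finset.smul_sum]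
  calc ∑ k ∈ Finset.range (d + 1), p.coeff k • a ^ k • x
      = ∑ k ∈ Finset.range (d + 1), ∑ i, p.coeff k • c i • b i ^ k • y i := by
        refine Finset.sum_congr rfl fun k hk => ?_
        rw [h k (Nat.lt_succ_iff.mp (Finset.mem_range.mp hk)), Finset.smul_sum]
    _ = _ := by
        rw [Finset.sum_comm]
        simp_rw [smul_comm (p.coeff _) (c _)]

end Polynomial

namespace Matrix

open Polynomial

variable {K ι n : Type*} [CommRing K] [Fintype ι] [Fintype n]

theorem vecMul_map_eval_eq_sum_of_pow_smul {d : ℕ} {M : Matrix n n K[X]}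
    (hM : ∀ i j, (M i j).natDegree ≤ d) {a : K} {x : n → K} {b c : ι → K} {y : ι → n → K}
    (h : ∀ k ≤ d, a ^ k • x = ∑ i, c i • b i ^ k • y i) :
    x ᵥ* M.map (eval a) = ∑ i, c i • (y i ᵥ* M.map (eval (b i))) := by
  ext j
  have hcol (l : n) := congrFun (eval_smul_eq_sum_of_pow_smul h (hM l j)) l
  simp only [Finset.sum_apply, Pi.smul_apply, smul_eq_mul] at hcol
  simp only [vecMul, dotProduct, map_apply, Finset.sum_apply, Pi.smul_apply, smul_eq_mul,
    Finset.mul_sum]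
  simp_rw [mul_comm (x _), hcol]
  rw [Finset.sum_comm]
  refine Finset.sum_congr rfl fun i _ => Finset.sum_congr rfl fun l _ => by ring

end Matrix

theorem map_eval_muWord_append_singleton {S ι : Type*} [Fintype ι] [DecidableEq ι]
    (μ : S → Matrix ι ι ℚ[X]) (u : List S) (σ : S) :
    (muWord μ (u ++ [σ])).map (eval 1) =
      (muWord μ u).map (eval 1) * (μ σ).map (eval ((u.length : ℚ) + 1)) := by
  have hzip : (u ++ [σ]).zipIdx = u.zipIdx ++ [(σ, u.length)] := by
    simp [List.zipIdx_append]
  rw [← coe_evalRingHom, muWord, hzip, List.map_append, List.prod_append, ← muWord,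
    Matrix.map_mul]
  simp [Matrix.map_map, shiftP, Function.comp_def, add_comm]

theorem vecMul_muWord_append_singleton_eq_sum {S : Type*} (f : List S → ℚ) {m n d : ℕ}
    (R : Fin m → List S) (C : Fin n → List S) (α : Fin n → ℚ)
    (μ : S → Matrix (Fin n) (Fin n) ℚ[X]) (σ : S) (hμdeg : ∀ i j, (μ σ i j).natDegree ≤ d)
    (hμclosed : ∀ i : Fin m, tableRow f C (R i) ᵥ* (μ σ).map (eval (((R i).length : ℚ) + 1)) =
      tableRow f C (R i ++ [σ]))
    {u : List S} (hu : α ᵥ* (muWord μ u).map (eval 1) = tableRow f C u) (c : Fin m → ℚ)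
    (hc : ∀ k ≤ d, ((u.length : ℚ) + 1) ^ k • tableRow f C u =
      ∑ i, c i • (((R i).length : ℚ) + 1) ^ k • tableRow f C (R i)) :
    α ᵥ* (muWord μ (u ++ [σ])).map (eval 1) = ∑ i, c i • tableRow f C (R i ++ [σ]) := by
  rw [map_eval_muWord_append_singleton, ← vecMul_vecMul, hu,
    vecMul_map_eval_eq_sum_of_pow_smul hμdeg hc]
  simp only [hμclosed]

theorem augmented_table_full_row_rank_general
    {S : Type*} (f : List S → ℚ) (m n d : ℕ)
    (R : Fin m → List S) (C : Fin n → List S)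
    (hrank : (tableA f R C d).rank = m)
    (α : Fin n → ℚ) (μ : S → Matrix (Fin n) (Fin n) (Polynomial ℚ))
    (hμdeg : ∀ (σ : S) (i j : Fin n), ((μ σ) i j).natDegree ≤ d)
    (hμclosed : ∀ (σ : S) (i : Fin m),
      Matrix.vecMul (tableRow f C (R i))
          ((μ σ).map (Polynomial.eval (((R i).length : ℚ) + 1)))
        = tableRow f C (R i ++ [σ]))
    (u : List S) (σ : S)
    (hu : Matrix.vecMul α ((muWord μ u).map (Polynomial.eval (1 : ℚ)))
        = tableRow f C u)
    (j : Fin n)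
    (hj : f ((u ++ [σ]) ++ C j)
        ≠ Matrix.vecMul α ((muWord μ (u ++ [σ])).map (Polynomial.eval (1 : ℚ))) j) :
    (Matrix.of (fun (i : Fin (m + 1)) (q : (Fin (d + 1) × Fin n) ⊕ Unit) =>
        Sum.elim (fun p => tableA f (Fin.snoc R u : Fin (m + 1) → List S) C d i p)
          (fun _ => f ((Fin.snoc R u : Fin (m + 1) → List S) i ++ (σ :: C j))) q)).rank = m + 1 := by
  set N := Matrix.of (fun (i : Fin (m + 1)) (q : (Fin (d + 1) × Fin n) ⊕ Unit) =>
        Sum.elim (fun p => tableA f (Fin.snoc R u : Fin (m + 1) → List S) C d i p)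
          (fun _ => f ((Fin.snoc R u : Fin (m + 1) → List S) i ++ (σ :: C j))) q) with hN
  have hA : LinearIndependent ℚ (tableA f R C d).row := by
    rw [linearIndependent_iff_card_eq_finrank_span, Set.finrank, ← rank_eq_finrank_span_row,
      hrank, Fintype.card_fin]
  have hinit : LinearIndependent ℚ (Fin.init N.row) := by
    refine LinearIndependent.of_comp (LinearMap.funLeft ℚ ℚ Sum.inl) ?_
    convert hA
    ext
    simp [hN, Fin.init, tableA]
  have hlast : N.row (Fin.last m) ∉ Submodule.span ℚ (Set.range (Fin.init N.row)) := by
    intro hspan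
    obtain ⟨c, hc⟩ := (Submodule.mem_span_range_iff_exists_fun ℚ).mp hspan
    have hpow : ∀ k ≤ d, ((u.length : ℚ) + 1) ^ k • tableRow f C u =
        ∑ i, c i • (((R i).length : ℚ) + 1) ^ k • tableRow f C (R i) := by
      intro k hk
      ext j'
      simpa [hN, Fin.init, tableA, tableRow] using
        (congrFun hc (Sum.inl (⟨k, Nat.lt_succ_of_le hk⟩, j'))).symm
    have hcol : ∑ i, c i * f (R i ++ σ :: C j) = f (u ++ σ :: C j) := by
      simpa [hN, Fin.init] using congrFun hc (Sum.inr ())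
    apply hj
    rw [vecMul_muWord_append_singleton_eq_sum f R C α μ σ (hμdeg σ) (hμclosed σ) hu c hpow]
    simp [tableRow, ← hcol]
  have hrows : LinearIndependent ℚ N.row := by
    rw [← Fin.snoc_init_self N.row]
    exact linearIndependent_finSnoc.mpr ⟨hinit, hlast⟩
  rw [hrows.rank_matrix, Fintype.card_fin]

/-- Let `A(R,C,d)` have full row rank and let `A_H = (α, μ, β)` be
an automaton associated to the `d`-closed table `H(R,C)` (so `α = row_C(r₁)`,
`β = e₁`, and the matrices `μ σ` have entries of degree `≤ d` and witness
`d`-closedness).  If `A_H` is correct on `u` but not on `uσ`, and `c_j` is a column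
word with `f(uσc_j) ≠ α·μ(uσ,1)·e_j`, then appending the row `u` yields a matrix
`[A(R·[u],C,d) | col_{R·[u]}(σc_j)]` of full row rank `m+1`. -/
theorem augmented_table_full_row_rank
    {S : Type*} [Fintype S] (f : List S → ℚ) (m n d : ℕ)
    (hm : 0 < m) (hn : 0 < n)
    (R : Fin m → List S) (C : Fin n → List S)
    (hrank : (tableA f R C d).rank = m)
    (α : Fin n → ℚ) (μ : S → Matrix (Fin n) (Fin n) (Polynomial ℚ))
    (β : Fin n → Polynomial ℚ)
    (hα : α = tableRow f C (R ⟨0, hm⟩))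
    (hβ : β = Pi.single (⟨0, hn⟩ : Fin n) (1 : Polynomial ℚ))
    (hμdeg : ∀ (σ : S) (i j : Fin n), ((μ σ) i j).natDegree ≤ d)
    (hμclosed : ∀ (σ : S) (i : Fin m),
      Matrix.vecMul (tableRow f C (R i))
          ((μ σ).map (Polynomial.eval (((R i).length : ℚ) + 1)))
        = tableRow f C (R i ++ [σ]))
    (u : List S) (σ : S)
    (hu : Matrix.vecMul α ((muWord μ u).map (Polynomial.eval (1 : ℚ)))
        = tableRow f C u)
    (huσ : Matrix.vecMul α ((muWord μ (u ++ [σ])).map (Polynomial.eval (1 : ℚ)))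
        ≠ tableRow f C (u ++ [σ]))
    (j : Fin n)
    (hj : f ((u ++ [σ]) ++ C j)
        ≠ Matrix.vecMul α ((muWord μ (u ++ [σ])).map (Polynomial.eval (1 : ℚ))) j) :
    (Matrix.of (fun (i : Fin (m + 1)) (q : (Fin (d + 1) × Fin n) ⊕ Unit) =>
        Sum.elim (fun p => tableA f (Fin.snoc R u : Fin (m + 1) → List S) C d i p)
          (fun _ => f ((Fin.snoc R u : Fin (m + 1) → List S) i ++ (σ :: C j))) q)).rank = m + 1 :=
  augmented_table_full_row_rank_general f m n d R C hrank α μ hμdeg hμclosed u σ hu j hj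
end

section
/- Let f : Σ* → ℚ, let d ∈ ℕ, and let R and C be sequences of words such that A(R,C,d) has full row rank. Let A_H = (α, μ, β) be an automaton associated to the d-closed table H(R,C). Let u ∈ Σ* and σ ∈ Σ be such that A_H is correct on u but not correct on uσ, and let c_j be the j-th word of C such that f(uσc_j) ≠ α·μ(uσ,1)·e_j. Set R' := R·[u] and C' := C·[σc_j]. Then for every d' > d, the matrix A(R',C',d') has full row rank. -/
open Polynomial Matrix

/-! Let `g` be a left kernel vector of `A(R',C',d')`. The polynomials `μ(σ)_{kj}` have degree at
most `d ≤ d'`, so evaluating them against the rows of `H(R',C)` is a combination of columns of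
`A(R',C',d')`; subtracting it from the new column `σ c_j` gives a vector of the column space that
`g` annihilates. By `d`-closedness that vector vanishes on the rows of `R`, and by correctness on
`u` its entry at `u` is `f(uσc_j) - α μ(uσ,1) e_j ≠ 0`. Hence `g_u = 0`, and the other entries
vanish because `A(R,C,d)` is a column submatrix of `A(R,C',d')` with independent rows. -/

section LinearAlgebra

variable {K κ : Type*} [Field K]

theorem Matrix.linearIndependent_row_of_rank_eq_card {ι : Type*} [Fintype ι] [Fintype κ]
    {M : Matrix ι κ K} (h : M.rank = Fintype.card ι) : LinearIndependent K M.row := by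
  rw [linearIndependent_iff_card_eq_finrank_span, Set.finrank, ← M.rank_eq_finrank_span_row, h]

theorem Matrix.linearIndependent_row_of_submatrix {ι κ' : Type*} {M : Matrix ι κ K}
    (e : κ' → κ) (h : LinearIndependent K (M.submatrix id e).row) :
    LinearIndependent K M.row :=
  LinearIndependent.of_comp (LinearMap.funLeft K K e) h

theorem Matrix.linearIndependent_row_of_init {m : ℕ} [Fintype κ] {M : Matrix (Fin (m + 1)) κ K}
    (hinit : LinearIndependent K (M.submatrix Fin.castSucc id).row) (w : κ → K)
    (hw : ∀ i : Fin m, (M *ᵥ w) i.castSucc = 0) (hlast : (M *ᵥ w) (Fin.last m) ≠ 0) :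
    LinearIndependent K M.row := by
  rw [Fintype.linearIndependent_iff] at hinit ⊢
  intro g hg
  have hgM : g ᵥ* M = 0 := by rw [Matrix.vecMul_eq_sum]; exact hg
  have hg_last : g (Fin.last m) = 0 := by
    have h := Matrix.dotProduct_mulVec g M w
    rw [hgM, zero_dotProduct] at h
    simp only [dotProduct, Fin.sum_univ_castSucc, hw, mul_zero,
      Finset.sum_const_zero, zero_add] at h
    exact (mul_eq_zero.mp h).resolve_right hlast
  have hg_init : ∀ i : Fin m, g i.castSucc = 0 := by
    refine hinit (fun i => g i.castSucc) ?_
    rw [Fin.sum_univ_castSucc, hg_last, zero_smul, add_zero] at hg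
    exact hg
  exact fun i => Fin.lastCases hg_last hg_init i

end LinearAlgebra

theorem muWord_append_singleton {S ι : Type*} [Fintype ι] [DecidableEq ι]
    (μ : S → Matrix ι ι (Polynomial ℚ)) (w : List S) (σ : S) :
    muWord μ (w ++ [σ]) = muWord μ w * (μ σ).map (shiftP w.length) := by
  simp [muWord, List.zipIdx_append]

theorem muWord_append_singleton_eval_one {S ι : Type*} [Fintype ι] [DecidableEq ι]
    (μ : S → Matrix ι ι (Polynomial ℚ)) (w : List S) (σ : S) :
    (muWord μ (w ++ [σ])).map (eval 1) =
      (muWord μ w).map (eval 1) * (μ σ).map (eval ((w.length : ℚ) + 1)) := by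
  rw [muWord_append_singleton, ← coe_evalRingHom, Matrix.map_mul, coe_evalRingHom]
  congr 1
  ext i k
  simp [shiftP, eval_comp, add_comm]

section Table

variable {S : Type*} (f : List S → ℚ) {m n : ℕ} (R : Fin m → List S) (C : Fin n → List S)

/-- Evaluating polynomials of degree at most `d` at `|r| + 1` is a linear combination of the
columns of `A(R,C,d)`: the coefficient of `xᵖ` multiplies the block `Δᵖ H(R,C)`. -/
theorem tableA_mulVec_coeff {d : ℕ} (P : Fin n → ℚ[X]) (hP : ∀ k, (P k).natDegree ≤ d)
    (i : Fin m) :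
    (tableA f R C d *ᵥ fun p => (P p.2).coeff p.1) i =
      tableRow f C (R i) ⬝ᵥ fun k => (P k).eval (((R i).length : ℚ) + 1) := by
  simp only [mulVec, dotProduct, tableA, tableRow, Fintype.sum_prod_type]
  rw [Finset.sum_comm]
  refine Finset.sum_congr rfl fun k _ => ?_
  rw [eval_eq_sum_range' (Nat.lt_succ_of_le (hP k)), Finset.mul_sum, Finset.sum_range]
  exact Finset.sum_congr rfl fun p _ => by ring

theorem tableA_eq_submatrix {n' d d' : ℕ} (hd : d ≤ d') (C' : Fin n' → List S)
    (e : Fin n → Fin n') (he : ∀ k, C' (e k) = C k) :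
    tableA f R C d =
      (tableA f R C' d').submatrix id fun p => (Fin.castLE (by omega) p.1, e p.2) := by
  ext i p
  simp [tableA, he]

theorem linearIndependent_row_tableA_of_le {n' d d' : ℕ} (hd : d ≤ d') (C' : Fin n' → List S)
    (e : Fin n → Fin n') (he : ∀ k, C' (e k) = C k)
    (h : LinearIndependent ℚ (tableA f R C d).row) :
    LinearIndependent ℚ (tableA f R C' d').row := by
  rw [tableA_eq_submatrix f R C hd C' e he] at h
  exact Matrix.linearIndependent_row_of_submatrix _ h

end Table

theorem extended_table_full_row_rank_general
    {S : Type*} (f : List S → ℚ) (m n d : ℕ)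
    (R : Fin m → List S) (C : Fin n → List S)
    (hrank : (tableA f R C d).rank = m)
    (α : Fin n → ℚ) (μ : S → Matrix (Fin n) (Fin n) (Polynomial ℚ))
    (hμdeg : ∀ (σ : S) (i j : Fin n), ((μ σ) i j).natDegree ≤ d)
    (hμclosed : ∀ (σ : S) (i : Fin m),
      Matrix.vecMul (tableRow f C (R i))
          ((μ σ).map (Polynomial.eval (((R i).length : ℚ) + 1)))
        = tableRow f C (R i ++ [σ]))
    (u : List S) (σ : S)
    (hu : Matrix.vecMul α ((muWord μ u).map (Polynomial.eval (1 : ℚ)))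
        = tableRow f C u)
    (j : Fin n)
    (hj : f ((u ++ [σ]) ++ C j)
        ≠ Matrix.vecMul α ((muWord μ (u ++ [σ])).map (Polynomial.eval (1 : ℚ))) j) :
    ∀ d' : ℕ, d < d' →
      (tableA f (Fin.snoc R u : Fin (m + 1) → List S)
          (Fin.snoc C (σ :: C j) : Fin (n + 1) → List S) d').rank = m + 1 := by
  intro d' hd'
  set R' : Fin (m + 1) → List S := Fin.snoc R u
  set A' := tableA f R' (Fin.snoc C (σ :: C j) : Fin (n + 1) → List S) d'
  set P : Fin (n + 1) → ℚ[X] := Fin.snoc (fun k => μ σ k j) 0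
  have hP : ∀ k, (P k).natDegree ≤ d' := Fin.lastCases (by simp [P])
    fun k => by simpa [P] using (hμdeg σ k j).trans hd'.le
  set w : Fin (d' + 1) × Fin (n + 1) → ℚ :=
    Pi.single (0, Fin.last n) 1 - fun p => (P p.2).coeff p.1
  have hz : ∀ i, (A' *ᵥ w) i =
      f (R' i ++ σ :: C j) -
        (tableRow f C (R' i) ᵥ* (μ σ).map (eval (((R' i).length : ℚ) + 1))) j := by
    intro i
    rw [mulVec_sub, Pi.sub_apply, mulVec_single_one, tableA_mulVec_coeff _ _ _ P hP]
    simp [A', P, tableA, tableRow, dotProduct, Fin.sum_univ_castSucc, vecMul]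
  have hinit : LinearIndependent ℚ (A'.submatrix Fin.castSucc id).row := by
    have hA' : A'.submatrix Fin.castSucc id = tableA f R (Fin.snoc C (σ :: C j)) d' := by
      ext i p
      simp [A', R', tableA]
    rw [hA']
    exact linearIndependent_row_tableA_of_le f R C hd'.le _ Fin.castSucc (by simp)
      (Matrix.linearIndependent_row_of_rank_eq_card (by simpa using hrank))
  refine ((Matrix.linearIndependent_row_of_init hinit w (fun i => ?_) ?_).rank_matrix).trans
    (Fintype.card_fin _)
  · rw [hz]
    simp [R', hμclosed, tableRow]
  · rw [hz]
    simp only [R', Fin.snoc_last]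
    rw [← hu, vecMul_vecMul, ← muWord_append_singleton_eval_one]
    exact sub_ne_zero.mpr (by simpa using hj)

/-- Let `A(R,C,d)` have full row rank and let `A_H = (α, μ, β)` be
an automaton associated to the `d`-closed table `H(R,C)`.  If `A_H` is correct on `u`
but not on `uσ`, and `c_j` is a column word with `f(uσc_j) ≠ α·μ(uσ,1)·e_j`, then for
`R' = R·[u]` and `C' = C·[σc_j]` the matrix `A(R',C',d')` has full row rank `m+1` for
every `d' > d`. -/
theorem extended_table_full_row_rank
    {S : Type*} [Fintype S] (f : List S → ℚ) (m n d : ℕ)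
    (hm : 0 < m) (hn : 0 < n)
    (R : Fin m → List S) (C : Fin n → List S)
    (hrank : (tableA f R C d).rank = m)
    (α : Fin n → ℚ) (μ : S → Matrix (Fin n) (Fin n) (Polynomial ℚ))
    (β : Fin n → Polynomial ℚ)
    (hα : α = tableRow f C (R ⟨0, hm⟩))
    (hβ : β = Pi.single (⟨0, hn⟩ : Fin n) (1 : Polynomial ℚ))
    (hμdeg : ∀ (σ : S) (i j : Fin n), ((μ σ) i j).natDegree ≤ d)
    (hμclosed : ∀ (σ : S) (i : Fin m),
      Matrix.vecMul (tableRow f C (R i))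
          ((μ σ).map (Polynomial.eval (((R i).length : ℚ) + 1)))
        = tableRow f C (R i ++ [σ]))
    (u : List S) (σ : S)
    (hu : Matrix.vecMul α ((muWord μ u).map (Polynomial.eval (1 : ℚ)))
        = tableRow f C u)
    (huσ : Matrix.vecMul α ((muWord μ (u ++ [σ])).map (Polynomial.eval (1 : ℚ)))
        ≠ tableRow f C (u ++ [σ]))
    (j : Fin n)
    (hj : f ((u ++ [σ]) ++ C j)
        ≠ Matrix.vecMul α ((muWord μ (u ++ [σ])).map (Polynomial.eval (1 : ℚ))) j) :
    ∀ d' : ℕ, d < d' →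
      (tableA f (Fin.snoc R u : Fin (m + 1) → List S)
          (Fin.snoc C (σ :: C j) : Fin (n + 1) → List S) d').rank = m + 1 :=
  extended_table_full_row_rank_general f m n d R C hrank α μ hμdeg hμclosed u σ hu j hj
end

section
/- Let A = (α, μ, β) be a P-finite automaton of dimension n over Σ and let d_max be the maximal degree of the polynomial entries of β and of the matrices μ(σ), σ ∈ Σ. Let C = [c_1,…,c_m] be a totally suffix-closed sequence of words and for 1 ≤ i ≤ m set M_i := span_{ℚ[x]}{B_A(c_j) : j ≤ i}. If the chain M_1 ⊊ M_2 ⊊ ⋯ ⊊ M_m is strictly increasing, then m ≤ (d_max+1)^n · n^{2n}. -/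
/-!
Let `B_j = B_A(c_j)` and let `r_i` be the rank of `M_i` over `ℚ(x)`; it is nondecreasing,
at most `n`, and positive once `β ≠ 0` since `c_1 = ε`. Suffix-closedness gives `|c_j| < j`, so
`B_j` has degree at most `d_max · j`. Fix a stretch `i₀ ≤ i ≤ i₁` on which `r_i = r` and count
`ℚ`-dimensions of the vectors of `M_i` of degree `≤ e`, with `e` the degree bound at `i₁`. Each
strict inclusion `M_i ⊊ M_{i+1}` is witnessed by a generator of degree `≤ e`, so the dimension
grows with `i`. At `i₀`, multiples of `r` generators independent over `ℚ(x)` give at least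
`r (e + 1 - d)` dimensions, `d` the degree bound at `i₀`; at `i₁`, a vector is determined by `r`
suitable coordinates, giving at most `r (e + 1)`. So each stretch has length at most `r d`, and
iterating over the at most `n` rank values gives the bound.
-/

open Polynomial Matrix

open Module Submodule

section Degrees

theorem natDegree_shiftP (k : ℕ) (p : ℚ[X]) : (shiftP k p).natDegree = p.natDegree := by
  rw [shiftP, natDegree_comp, natDegree_X_add_C, mul_one]

theorem Matrix.natDegree_list_prod_apply_le {R ι : Type*} [Semiring R] [Fintype ι]
    [DecidableEq ι] {D : ℕ} (L : List (Matrix ι ι R[X]))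
    (hL : ∀ A ∈ L, ∀ a b, (A a b).natDegree ≤ D) (a b : ι) :
    (L.prod a b).natDegree ≤ D * L.length := by
  induction L generalizing a b with
  | nil => by_cases hab : a = b <;> simp [hab]
  | cons A L ih =>
    rw [List.prod_cons, Matrix.mul_apply, List.length_cons, mul_add_one, add_comm]
    refine natDegree_sum_le_of_forall_le _ _ fun c _ => natDegree_mul_le.trans ?_
    exact add_le_add (hL A List.mem_cons_self a c)
      (ih (fun B hB => hL B (List.mem_cons_of_mem A hB)) c b)

variable {S ι : Type*} [Fintype ι] [DecidableEq ι] {D : ℕ}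
  {μ : S → Matrix ι ι ℚ[X]} {β : ι → ℚ[X]}

theorem natDegree_muWord_apply_le (hμ : ∀ σ a b, (μ σ a b).natDegree ≤ D) (w : List S)
    (a b : ι) : (muWord μ w a b).natDegree ≤ D * w.length := by
  have hfactors : ∀ A ∈ w.zipIdx.map (fun p => (μ p.1).map (shiftP p.2)),
      ∀ a b, (A a b).natDegree ≤ D := by
    simp only [List.mem_map, Prod.exists]
    rintro _ ⟨σ, k, -, rfl⟩ a b
    simpa [natDegree_shiftP] using hμ σ a b
  simpa [muWord] using Matrix.natDegree_list_prod_apply_le _ hfactors a b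

theorem natDegree_backF_apply_le (hμ : ∀ σ a b, (μ σ a b).natDegree ≤ D)
    (hβ : ∀ a, (β a).natDegree ≤ D) (w : List S) (a : ι) :
    (backF μ β w a).natDegree ≤ D * (w.length + 1) := by
  rw [mul_add_one]
  refine natDegree_sum_le_of_forall_le _ _ fun b _ => natDegree_mul_le.trans ?_
  exact add_le_add (natDegree_muWord_apply_le hμ w a b) ((natDegree_shiftP _ _).trans_le (hβ b))

theorem backF_nil : backF μ β [] = β := by
  funext a
  simp [backF, muWord, shiftP]

theorem backF_zero (w : List S) : backF μ (0 : ι → ℚ[X]) w = 0 := by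
  simp [backF, shiftP, ← Pi.zero_def]

end Degrees

theorem length_le_of_suffix_closed {α : Type*} {m : ℕ} (C : Fin m → List α)
    (hC : ∀ (i : Fin m) (s : List α), s <:+ C i → ∃ j ≤ i, C j = s) (i : Fin m) :
    (C i).length ≤ i := by
  induction i using WellFoundedLT.induction with
  | _ i ih =>
    cases hCi : C i with
    | nil => simp
    | cons x t =>
      obtain ⟨j, hji, hCj⟩ := hC i t (hCi ▸ List.suffix_cons x t)
      have hj : j < i := lt_of_le_of_ne hji fun h => by simp [h, hCi] at hCj
      have := ih j hj
      rw [hCj] at this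
      simp only [List.length_cons]
      omega

theorem Module.Dual.exists_finset_card_le_finrank {K V ι : Type*} [Field K] [AddCommGroup V]
    [Module K V] [FiniteDimensional K V] (f : ι → Module.Dual K V) :
    ∃ J : Finset ι, J.card ≤ finrank K V ∧ ∀ v, (∀ a ∈ J, f a v = 0) → ∀ a, f a v = 0 := by
  classical
  obtain ⟨κ, c, -, hspan, hli⟩ := exists_linearIndependent' K f
  have := hli.finite
  let := Fintype.ofFinite κ
  refine ⟨Finset.univ.image c, ?_, fun v hv a => ?_⟩
  · calc _ ≤ Fintype.card κ := Finset.card_image_le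
      _ ≤ finrank K (Module.Dual K V) := hli.fintype_card_le_finrank
      _ = finrank K V := Subspace.dual_finrank_eq
  · have : span K (Set.range f) ≤ LinearMap.ker (Module.Dual.eval K V v) := by
      rw [← hspan, span_le]
      rintro _ ⟨k, rfl⟩
      exact hv _ (Finset.mem_image_of_mem _ (Finset.mem_univ k))
    exact this (subset_span ⟨a, rfl⟩)

theorem Polynomial.mul_mem_degreeLT_of_natDegree_le {R : Type*} [Semiring R] {p q : R[X]}
    {d k : ℕ} (hq : q.natDegree ≤ d) (hp : p ∈ degreeLT R k) : q * p ∈ degreeLT R (d + k) := by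
  rcases eq_or_ne q 0 with rfl | hq0
  · simp
  rw [mem_degreeLT] at *
  calc (q * p).degree ≤ q.degree + p.degree := degree_mul_le _ _
    _ < d + k :=
      WithBot.add_lt_add_of_le_of_lt (by simpa using hq0) (degree_le_of_natDegree_le hq) hp

theorem Polynomial.mem_degreeLT_succ_of_natDegree_le {R : Type*} [Semiring R] {p : R[X]}
    {d : ℕ} (hp : p.natDegree ≤ d) : p ∈ degreeLT R (d + 1) := by
  rw [degreeLT_succ_eq_degreeLE, mem_degreeLE]
  exact degree_le_of_natDegree_le hp

section RationalFunctionRank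

variable {F ι : Type*} [Field F]

noncomputable def ratFuncVec : (ι → F[X]) →ₗ[F[X]] ι → RatFunc F :=
  LinearMap.compLeft (Algebra.linearMap F[X] (RatFunc F)) ι

theorem ratFuncVec_apply (v : ι → F[X]) (a : ι) :
    ratFuncVec v a = algebraMap F[X] (RatFunc F) (v a) := rfl

theorem ratFuncVec_injective : Function.Injective (ratFuncVec : (ι → F[X]) → ι → RatFunc F) :=
  (IsFractionRing.injective F[X] (RatFunc F)).comp_left

noncomputable def fracRank (N : Submodule F[X] (ι → F[X])) : ℕ :=
  finrank (RatFunc F) (span (RatFunc F) (ratFuncVec '' (N : Set (ι → F[X]))))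

theorem fracRank_mono [Fintype ι] {N N' : Submodule F[X] (ι → F[X])} (h : N ≤ N') :
    fracRank N ≤ fracRank N' :=
  Submodule.finrank_mono (span_mono (Set.image_mono h))

theorem fracRank_le_card [Fintype ι] (N : Submodule F[X] (ι → F[X])) :
    fracRank N ≤ Fintype.card ι :=
  (Submodule.finrank_le _).trans (finrank_pi _).le

theorem one_le_fracRank [Fintype ι] {N : Submodule F[X] (ι → F[X])} (hN : N ≠ ⊥) :
    1 ≤ fracRank N := by
  obtain ⟨v, hvN, hv⟩ := (Submodule.ne_bot_iff N).mp hN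
  refine Submodule.one_le_finrank_iff.mpr ((Submodule.ne_bot_iff _).mpr ?_)
  exact ⟨ratFuncVec v, subset_span ⟨v, hvN, rfl⟩,
    fun h => hv (ratFuncVec_injective (h.trans (map_zero _).symm))⟩

theorem span_ratFuncVec_image_span (s : Set (ι → F[X])) :
    span (RatFunc F) (ratFuncVec '' (span F[X] s : Set (ι → F[X]))) =
      span (RatFunc F) (ratFuncVec '' s) := by
  rw [← Submodule.map_coe, Submodule.map_span, Submodule.span_span_of_tower]

noncomputable def lowDegreePart (N : Submodule F[X] (ι → F[X])) (e : ℕ) :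
    Submodule F (ι → F[X]) :=
  N.restrictScalars F ⊓ Submodule.pi Set.univ fun _ => degreeLT F e

noncomputable def lowDegreePart.entries (N : Submodule F[X] (ι → F[X])) (e : ℕ) :
    lowDegreePart N e →ₗ[F] ι → degreeLT F e where
  toFun v a := ⟨v.1 a, v.2.2 a (Set.mem_univ a)⟩
  map_add' _ _ := rfl
  map_smul' _ _ := rfl

theorem lowDegreePart.entries_injective (N : Submodule F[X] (ι → F[X])) (e : ℕ) :
    Function.Injective (lowDegreePart.entries N e) := fun _ _ h =>
  Subtype.ext (funext fun a => congrArg Subtype.val (congrFun h a))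

instance [Fintype ι] (N : Submodule F[X] (ι → F[X])) (e : ℕ) :
    FiniteDimensional F (lowDegreePart N e) :=
  Module.Finite.of_injective _ (lowDegreePart.entries_injective N e)

theorem lowDegreePart_mono {N N' : Submodule F[X] (ι → F[X])} (h : N ≤ N') (e : ℕ) :
    lowDegreePart N e ≤ lowDegreePart N' e :=
  inf_le_inf_right _ (Submodule.restrictScalars_mono F h)

theorem finrank_degreeLT (e : ℕ) : finrank F (degreeLT F e) = e := by
  simp [finrank_eq_card_basis (degreeLT.basis F e)]

/-- A vector of `N` is determined by `fracRank N` suitably chosen entries. -/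
theorem finrank_lowDegreePart_le [Fintype ι] (N : Submodule F[X] (ι → F[X])) (e : ℕ) :
    finrank F (lowDegreePart N e) ≤ fracRank N * e := by
  classical
  set W := span (RatFunc F) (ratFuncVec '' (N : Set (ι → F[X])))
  obtain ⟨J, hJ, hJW⟩ := Module.Dual.exists_finset_card_le_finrank
    fun a : ι => (LinearMap.proj a : (ι → RatFunc F) →ₗ[RatFunc F] RatFunc F) ∘ₗ W.subtype
  let restrict := LinearMap.funLeft F (degreeLT F e) ((↑) : J → ι) ∘ₗ lowDegreePart.entries N e
  have hinj : Function.Injective restrict := by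
    refine (injective_iff_map_eq_zero restrict).mpr fun v hv => ?_
    have hW : ratFuncVec v.1 ∈ W := subset_span ⟨v.1, v.2.1, rfl⟩
    have hzero := hJW ⟨_, hW⟩ fun a ha => by
      simpa [ratFuncVec_apply, restrict, lowDegreePart.entries] using
        congrArg Subtype.val (congrFun hv ⟨a, ha⟩)
    exact Subtype.ext (ratFuncVec_injective (funext fun a => by simpa using hzero a))
  calc finrank F (lowDegreePart N e) ≤ finrank F (J → degreeLT F e) :=
        LinearMap.finrank_le_finrank_of_injective hinj
    _ = J.card * e := by simp [finrank_pi_fintype, finrank_degreeLT]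
    _ ≤ fracRank N * e := Nat.mul_le_mul_right e hJ

theorem card_mul_le_finrank_lowDegreePart [Fintype ι] {κ : Type*} [Fintype κ]
    {N : Submodule F[X] (ι → F[X])} {v : κ → ι → F[X]} {d : ℕ} (hvN : ∀ b, v b ∈ N)
    (hv : ∀ b a, (v b a).natDegree ≤ d)
    (hli : LinearIndependent (RatFunc F) (ratFuncVec ∘ v)) (k : ℕ) :
    Fintype.card κ * k ≤ finrank F (lowDegreePart N (d + k)) := by
  have hli' : LinearIndependent F[X] v :=
    (hli.restrict_scalars' F[X]).of_comp ratFuncVec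
  let combine : (κ → degreeLT F k) →ₗ[F] ι → F[X] :=
    (Fintype.linearCombination F[X] v).restrictScalars F ∘ₗ
      LinearMap.compLeft (degreeLT F k).subtype κ
  have hmem : ∀ c, combine c ∈ lowDegreePart N (d + k) := fun c => by
    refine ⟨sum_mem fun b _ => smul_mem _ _ (hvN b), fun a _ => ?_⟩
    simp only [combine, LinearMap.coe_comp, Function.comp_apply, LinearMap.coe_restrictScalars,
      Fintype.linearCombination_apply, Finset.sum_apply, Pi.smul_apply, smul_eq_mul]
    exact sum_mem fun b _ => mul_comm (v b a) _ ▸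
      mul_mem_degreeLT_of_natDegree_le (hv b a) (c b).2
  have hinj : Function.Injective (combine.codRestrict _ hmem) := fun c c' h =>
    Subtype.val_injective.comp_left
      (hli'.fintypeLinearCombination_injective (congrArg Subtype.val h))
  calc Fintype.card κ * k = finrank F (κ → degreeLT F k) := by
        simp [finrank_pi_fintype, finrank_degreeLT]
    _ ≤ _ := LinearMap.finrank_le_finrank_of_injective hinj

def GeneratedInDegreeLE (N : Submodule F[X] (ι → F[X])) (d : ℕ) : Prop :=
  ∃ s : Set (ι → F[X]), span F[X] s = N ∧ ∀ v ∈ s, ∀ a, (v a).natDegree ≤ d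

theorem GeneratedInDegreeLE.mono {N : Submodule F[X] (ι → F[X])} {d d' : ℕ}
    (h : GeneratedInDegreeLE N d) (hd : d ≤ d') : GeneratedInDegreeLE N d' :=
  let ⟨s, hs, hdeg⟩ := h
  ⟨s, hs, fun v hv a => (hdeg v hv a).trans hd⟩

theorem GeneratedInDegreeLE.fracRank_mul_le [Fintype ι] {N : Submodule F[X] (ι → F[X])} {d : ℕ}
    (h : GeneratedInDegreeLE N d) (k : ℕ) :
    fracRank N * k ≤ finrank F (lowDegreePart N (d + k)) := by
  obtain ⟨s, rfl, hdeg⟩ := h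
  obtain ⟨κ, c, -, hspan, hli⟩ := exists_linearIndependent' (RatFunc F)
    fun v : s => ratFuncVec (v : ι → F[X])
  have := hli.finite
  let := Fintype.ofFinite κ
  have hcard : fracRank (span F[X] s) = Fintype.card κ := by
    rw [fracRank, span_ratFuncVec_image_span, ← finrank_span_eq_card hli, hspan,
      ← Set.image_eq_range]
  rw [hcard]
  exact card_mul_le_finrank_lowDegreePart (fun b => subset_span (c b).2)
    (fun b => hdeg _ (c b).2) hli k

theorem GeneratedInDegreeLE.lowDegreePart_lt {N N' : Submodule F[X] (ι → F[X])} {d : ℕ}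
    (h : GeneratedInDegreeLE N' d) (hlt : N < N') :
    lowDegreePart N (d + 1) < lowDegreePart N' (d + 1) := by
  obtain ⟨s, rfl, hdeg⟩ := h
  obtain ⟨v, hvs, hvN⟩ := Set.not_subset.mp fun hs => hlt.not_ge (span_le.mpr hs)
  refine SetLike.lt_iff_le_and_exists.mpr ⟨lowDegreePart_mono hlt.le _, v,
    mem_inf.mpr ⟨subset_span hvs, fun a _ => mem_degreeLT_succ_of_natDegree_le (hdeg v hvs a)⟩,
    fun hv => hvN (mem_inf.mp hv).1⟩

theorem Fin.add_sub_le_of_strictMonoOn {m : ℕ} {f : Fin m → ℕ} {a b : Fin m} (hab : a ≤ b)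
    (hf : StrictMonoOn f (Set.Icc a b)) : f a + (b - a) ≤ f b := by
  have hcard := Finset.card_le_card_of_injOn f
    (s := Finset.Icc a b) (t := Finset.Icc (f a) (f b))
    (fun k hk => by
      simp only [Finset.coe_Icc, Set.mem_Icc] at hk ⊢
      exact ⟨hf.monotoneOn ⟨le_rfl, hab⟩ hk hk.1, hf.monotoneOn hk ⟨hab, le_rfl⟩ hk.2⟩)
    (by simpa using hf.injOn)
  rw [Fin.card_Icc, Nat.card_Icc] at hcard
  have : (a : ℕ) ≤ b := hab
  omega

/-- While the rank stays `r`, the spaces of vectors of degree `≤ e` gain a dimension per step,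
yet their dimensions lie between `r (e + 1 - d)` and `r (e + 1)`. -/
theorem sub_le_fracRank_mul_of_fracRank_eq [Fintype ι] {m D : ℕ}
    {N : Fin m → Submodule F[X] (ι → F[X])} (hN : StrictMono N)
    (hgen : ∀ k, GeneratedInDegreeLE (N k) (D * (k + 1))) {a b : Fin m} (hab : a ≤ b)
    (hrank : fracRank (N a) = fracRank (N b)) :
    (b : ℕ) - a ≤ fracRank (N b) * (D * (a + 1)) := by
  set d := D * ((a : ℕ) + 1)
  set e := D * ((b : ℕ) + 1)
  have hde : d ≤ e := Nat.mul_le_mul_left D (by simpa using hab)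
  have hlower := (hgen a).fracRank_mul_le (e + 1 - d)
  rw [show d + (e + 1 - d) = e + 1 by omega] at hlower
  have hchain : finrank F (lowDegreePart (N a) (e + 1)) + (b - a) ≤
      finrank F (lowDegreePart (N b) (e + 1)) :=
    Fin.add_sub_le_of_strictMonoOn hab fun k _ k' hk' hkk' =>
      Submodule.finrank_lt_finrank_of_lt
        (((hgen k').mono (Nat.mul_le_mul_left D (by simpa using hk'.2))).lowDegreePart_lt
          (hN hkk'))
  have hupper := finrank_lowDegreePart_le (N b) (e + 1)
  rw [hrank] at hlower
  have : fracRank (N b) * (e + 1) = fracRank (N b) * (e + 1 - d) + fracRank (N b) * d := by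
    rw [← mul_add]; congr 1; omega
  omega

/-- If the rank first reaches `r + 1` at an index `a ≤ plateauBound D r`, it stays there for at
most `(r + 1) D (a + 1)` further steps. -/
def plateauBound (D : ℕ) : ℕ → ℕ
  | 0 => 0
  | r + 1 => (plateauBound D r + 1) * (1 + (r + 1) * D)

theorem plateauBound_le_plateauBound_succ (D r : ℕ) : plateauBound D r ≤ plateauBound D (r + 1) :=
  calc plateauBound D r ≤ (plateauBound D r + 1) * 1 := by omega
    _ ≤ plateauBound D (r + 1) := Nat.mul_le_mul_left _ (Nat.le_add_right 1 _)

theorem plateauBound_le {D n r : ℕ} (hr : r ≤ n) :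
    plateauBound D r ≤ (D + 1) ^ r * n ^ (2 * r) := by
  induction r with
  | zero => simp [plateauBound]
  | succ r ih =>
    have ih := ih (by omega)
    rw [plateauBound, pow_succ, show 2 * (r + 1) = 2 * r + 2 by ring, pow_add]
    set P := (D + 1) ^ r * n ^ (2 * r)
    rcases Nat.eq_zero_or_pos r with rfl | hr0
    · have : 1 ≤ n ^ 2 := Nat.one_le_pow _ _ (by omega)
      simp only [plateauBound, zero_add, one_mul, pow_zero, mul_zero]
      nlinarith
    · have hP : 1 ≤ P :=
        Nat.mul_le_mul (Nat.one_le_pow _ _ (by omega)) (Nat.one_le_pow _ _ (by omega))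
      have hn : 2 * (1 + n * D) ≤ (D + 1) * n ^ 2 := by
        have : 2 ≤ n := by omega
        nlinarith [Nat.mul_le_mul_right (n * D) this, Nat.mul_le_mul this this]
      calc (plateauBound D r + 1) * (1 + (r + 1) * D) ≤ P * (2 * (1 + n * D)) := by
            rw [← mul_assoc, mul_two]
            gcongr
        _ ≤ P * ((D + 1) * n ^ 2) := Nat.mul_le_mul_left P hn
        _ = _ := by ring

theorem add_one_le_plateauBound {m D : ℕ} {g : Fin m → ℕ} (hg : Monotone g) (hpos : ∀ i, 1 ≤ g i)
    (hplateau : ∀ a b, a ≤ b → g a = g b → (b : ℕ) - a ≤ g b * (D * (a + 1))) :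
    ∀ (r : ℕ) (i : Fin m), g i ≤ r → (i : ℕ) + 1 ≤ plateauBound D r := by
  intro r
  induction r with
  | zero => exact fun i hi => absurd (hpos i) (by omega)
  | succ r ih =>
    intro i hi
    by_cases hir : g i ≤ r
    · exact (ih i hir).trans (plateauBound_le_plateauBound_succ D r)
    obtain ⟨a, ha, hmin⟩ := wellFounded_lt.has_min {k | g k = g i} ⟨i, rfl⟩
    have hai : a ≤ i := not_lt.mp fun h => hmin i rfl h
    have haB : (a : ℕ) ≤ plateauBound D r := by
      rcases Nat.eq_zero_or_pos a with ha0 | ha0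
      · omega
      · let a' : Fin m := ⟨a - 1, by omega⟩
        have ha' : a' < a := Fin.lt_def.mpr (by simp [a']; omega)
        have hga' : g a' ≠ g i := fun h => hmin a' h ha'
        have := hg ha'.le
        have ha : g a = g i := ha
        have := ih a' (by omega)
        have : (a' : ℕ) = a - 1 := rfl
        omega
    have hstep := hplateau a i hai ha
    have hgi : g i = r + 1 := by omega
    rw [hgi] at hstep
    calc (i : ℕ) + 1 ≤ (a + 1) * (1 + (r + 1) * D) := by
          have : (i : ℕ) ≤ a + (r + 1) * (D * (a + 1)) := by omega
          nlinarith
      _ ≤ _ := Nat.mul_le_mul_right _ (by omega)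

theorem card_le_of_strictMono_generatedInDegreeLE [Fintype ι] {m D : ℕ}
    {N : Fin m → Submodule F[X] (ι → F[X])} (hN : StrictMono N)
    (hgen : ∀ k, GeneratedInDegreeLE (N k) (D * (k + 1))) (hne : ∀ k, N k ≠ ⊥) :
    m ≤ (D + 1) ^ Fintype.card ι * Fintype.card ι ^ (2 * Fintype.card ι) := by
  rcases m with _ | m
  · exact Nat.zero_le _
  have hlast := add_one_le_plateauBound (g := fun k => fracRank (N k))
    (fun _ _ h => fracRank_mono (hN.monotone h)) (fun k => one_le_fracRank (hne k))
    (fun _ _ hab hrank => sub_le_fracRank_mul_of_fracRank_eq hN hgen hab hrank)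
    _ (Fin.last m) (fracRank_le_card _)
  simp only [Fin.val_last] at hlast
  exact hlast.trans (plateauBound_le le_rfl)

end RationalFunctionRank

theorem column_count_bound_general
    {S : Type*} (n m dmax : ℕ)
    (μ : S → Matrix (Fin n) (Fin n) (Polynomial ℚ))
    (β : Fin n → Polynomial ℚ)
    (hβdeg : ∀ i, (β i).natDegree ≤ dmax)
    (hμdeg : ∀ (σ : S) (i j : Fin n), ((μ σ) i j).natDegree ≤ dmax)
    (C : Fin m → List S)
    (hsuffix : ∀ (i : Fin m) (s : List S), s <:+ C i → ∃ j : Fin m, j ≤ i ∧ C j = s)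
    (M : Fin m → Submodule (Polynomial ℚ) (Fin n → Polynomial ℚ))
    (hM : ∀ i : Fin m,
      M i = Submodule.span (Polynomial ℚ)
        ((fun j : Fin m => backF μ β (C j)) '' {j : Fin m | j ≤ i}))
    (hchain : ∀ (i : ℕ) (h : i + 1 < m),
      M ⟨i, Nat.lt_of_succ_lt h⟩ < M ⟨i + 1, h⟩) :
    m ≤ (dmax + 1) ^ n * n ^ (2 * n) := by
  rcases m with _ | m
  · exact Nat.zero_le _
  have hM_strictMono : StrictMono M :=
    Fin.strictMono_iff_lt_succ.mpr fun i => hchain i i.succ.isLt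
  have hlen := length_le_of_suffix_closed C hsuffix
  have hgen (k : Fin (m + 1)) : GeneratedInDegreeLE (M k) (dmax * (k + 1)) := by
    refine ⟨_, (hM k).symm, ?_⟩
    rintro _ ⟨j, hjk, rfl⟩ a
    refine (natDegree_backF_apply_le hμdeg hβdeg _ a).trans (Nat.mul_le_mul_left _ ?_)
    have := hlen j
    have : (j : ℕ) ≤ k := hjk
    omega
  by_cases hβ : β = 0
  · have hM_bot (k) : M k = ⊥ := by simp [hM k, hβ, backF_zero]
    obtain rfl : m = 0 := by
      simpa using hM_strictMono.injective ((hM_bot 0).trans (hM_bot (Fin.last m)).symm)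
    rcases n with _ | n
    · simp
    · exact Nat.one_le_iff_ne_zero.mpr (by positivity)
  · have hC₀ : C 0 = [] := List.eq_nil_of_length_eq_zero (Nat.le_zero.mp (hlen 0))
    have hβ_mem (k) : β ∈ M k := by
      rw [hM k]
      exact subset_span ⟨0, Fin.zero_le k, by simp [hC₀, backF_nil]⟩
    simpa using card_le_of_strictMono_generatedInDegreeLE hM_strictMono hgen
      fun k => (Submodule.ne_bot_iff _).mpr ⟨β, hβ_mem k, hβ⟩

/-- Let `A = (α, μ, β)` be a P-finite automaton of dimension `n`
whose polynomial entries (of `β` and the `μ σ`) have degree at most `dmax`, and let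
`C = [c₁, …, c_m]` be a totally suffix-closed sequence of words.  If the chain of
`ℚ[x]`-submodules `M i := span{B_A(c_j) : j ≤ i}` is strictly increasing, then
`m ≤ (dmax+1)^n · n^(2n)`. -/
theorem column_count_bound
    {S : Type*} [Fintype S] (n m dmax : ℕ)
    (α : Fin n → ℚ) (μ : S → Matrix (Fin n) (Fin n) (Polynomial ℚ))
    (β : Fin n → Polynomial ℚ)
    (hβdeg : ∀ i, (β i).natDegree ≤ dmax)
    (hμdeg : ∀ (σ : S) (i j : Fin n), ((μ σ) i j).natDegree ≤ dmax)
    (C : Fin m → List S)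
    (hsuffix : ∀ (i : Fin m) (s : List S), s <:+ C i → ∃ j : Fin m, j ≤ i ∧ C j = s)
    (M : Fin m → Submodule (Polynomial ℚ) (Fin n → Polynomial ℚ))
    (hM : ∀ i : Fin m,
      M i = Submodule.span (Polynomial ℚ)
        ((fun j : Fin m => backF μ β (C j)) '' {j : Fin m | j ≤ i}))
    (hchain : ∀ (i : ℕ) (h : i + 1 < m),
      M ⟨i, Nat.lt_of_succ_lt h⟩ < M ⟨i + 1, h⟩) :
    m ≤ (dmax + 1) ^ n * n ^ (2 * n) :=
  column_count_bound_general n m dmax μ β hβdeg hμdeg C hsuffix M hM hchain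
end

section
/- Let A = (α, μ, β) be a ℚ-weighted automaton of dimension n over a finite alphabet Σ such that every entry of α and of each matrix μ(σ), σ ∈ Σ, can be written as a fraction p/q with p, q integers, |p| ≤ B and 1 ≤ q ≤ B, for some integer B ≥ 2. Suppose that α·μ(w) ∈ ℤ^n for every word w ∈ Σ*. Then, setting k_0 := n(n − 1/2)·log₂ n + n²·log₂ B, there exists a finite set W ⊆ Σ* containing at most k_0 + n words, each of length at most k_0 + n, such that span_ℤ{α·μ(w) : w ∈ W} = span_ℤ{α·μ(w) : w ∈ Σ*}, i.e. the set {α·μ(w) : w ∈ W} generates the forward module of A. -/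
/-
Let `L` be the forward module and `r` the dimension of its `ℚ`-span `V`. Words of length `< n`
already span `V` over `ℚ` (the spans of words of length `≤ k` grow strictly until they
stabilise), so `r` of them form a `ℚ`-basis; their entries are at most `B (nB)^(n-1)` in absolute
value, so by Hadamard's inequality the Gram determinant of the lattice they span is at most
`(n B² (nB)^(2n-2))^n`, whose `log₄` is `k₀`. Now add words greedily: while the current `ℤ`-span
is not `L`, the empty word or a one-letter extension of a chosen word lies outside it; adding
it gives a strictly larger lattice of the same rank, so the Gram determinant (a positive integer,
as `L ⊆ ℤ^n`) is divided by the square of the index, which is at least `4`. Hence at most `k₀`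
words are added, each at most one letter longer than the words chosen before it.
-/

open Matrix Submodule Set

section GramDet

variable {K ι : Type*} [Fintype ι]

def gramDet [CommRing K] {m : Type*} [Fintype m] [DecidableEq m] (V : Matrix m ι K) : K :=
  (V * Vᵀ).det

section CommRing

variable [CommRing K] {m : Type*} [Fintype m] [DecidableEq m]

theorem gramDet_mul (A : Matrix m m K) (V : Matrix m ι K) :
    gramDet (A * V) = A.det ^ 2 * gramDet V := by
  rw [gramDet, gramDet, transpose_mul, ← Matrix.mul_assoc, Matrix.mul_assoc A, det_mul, det_mul,
    det_transpose]
  ring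

theorem gramDet_updateRow_vecMul (V : Matrix m ι K) (i : m) (r : m → K) :
    gramDet (V.updateRow i (r ᵥ* V)) = r i ^ 2 * gramDet V := by
  have hdet : (updateRow 1 i r).det = r i := by
    simpa [← vecMul_eq_sum] using det_updateRow_sum (1 : Matrix m m K) i r
  rw [← hdet, ← gramDet_mul, updateRow_mul, Matrix.one_mul]

theorem RingHom.map_gramDet {L : Type*} [CommRing L] (f : K →+* L) (V : Matrix m ι K) :
    f (gramDet V) = gramDet (V.map f) := by
  rw [gramDet, f.map_det, RingHom.mapMatrix_apply, Matrix.map_mul, transpose_map]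
  rfl

theorem gramDet_eq_mul_of_orthogonal {n : ℕ} (V : Matrix (Fin (n + 1)) ι K)
    (h : V.submatrix Fin.succ id *ᵥ V 0 = 0) :
    gramDet V = (V 0 ⬝ᵥ V 0) * gramDet (V.submatrix Fin.succ id) := by
  have hzero : ∀ j : Fin n, (V * Vᵀ) 0 j.succ = 0 := fun j => by
    rw [mul_apply', dotProduct_comm]
    exact congrFun h j
  rw [gramDet, det_succ_row_zero, Fin.sum_univ_succ]
  simp only [hzero, mul_zero, zero_mul, Finset.sum_const_zero, add_zero]
  simp only [Fin.val_zero, pow_zero, one_mul, Fin.succAbove_zero]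
  rfl

end CommRing

theorem exists_mulVec_sub_vecMul_eq_zero [Field K] {m : Type*} [Fintype m] [DecidableEq m]
    (U : Matrix m ι K) (hU : gramDet U ≠ 0) (x : ι → K) :
    ∃ t : m → K, U *ᵥ (x - t ᵥ* U) = 0 := by
  refine ⟨(U * Uᵀ)⁻¹ *ᵥ (U *ᵥ x), ?_⟩
  rw [mulVec_sub, ← mulVec_transpose, mulVec_mulVec, mulVec_mulVec,
    mul_nonsing_inv _ (isUnit_iff_ne_zero.mpr hU), one_mulVec, sub_self]

variable [Field K] [LinearOrder K] [IsStrictOrderedRing K]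

theorem dotProduct_self_nonneg (v : ι → K) : 0 ≤ v ⬝ᵥ v :=
  Finset.sum_nonneg fun i _ => mul_self_nonneg (v i)

theorem exists_orthogonal_component {n : ℕ} (V : Matrix (Fin (n + 1)) ι K)
    (hU : gramDet (V.submatrix Fin.succ id) ≠ 0) :
    ∃ r : Fin (n + 1) → K, r 0 = 1 ∧ V.submatrix Fin.succ id *ᵥ (r ᵥ* V) = 0 ∧
      (r ᵥ* V) ⬝ᵥ (r ᵥ* V) ≤ V 0 ⬝ᵥ V 0 := by
  set U := V.submatrix Fin.succ id
  obtain ⟨t, ht⟩ := exists_mulVec_sub_vecMul_eq_zero U hU (V 0)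
  refine ⟨Fin.cons 1 (-t), rfl, ?_⟩
  have hw : Fin.cons 1 (-t) ᵥ* V = V 0 - t ᵥ* U := by
    simp [vecMul_eq_sum, Fin.sum_univ_succ, sub_eq_add_neg]
    rfl
  set w := Fin.cons 1 (-t) ᵥ* V
  have hwp : w ⬝ᵥ t ᵥ* U = 0 := by
    rw [← mulVec_transpose, dotProduct_mulVec, vecMul_transpose, hw, ht, zero_dotProduct]
  refine ⟨hw ▸ ht, ?_⟩
  rw [show V 0 = w + t ᵥ* U by rw [hw]; abel, add_dotProduct, dotProduct_add, dotProduct_add,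
    hwp, dotProduct_comm (t ᵥ* U) w, hwp]
  linarith [dotProduct_self_nonneg (t ᵥ* U)]

theorem gramDet_pos_and_le_prod {n : ℕ} (V : Matrix (Fin n) ι K) (hV : LinearIndependent K V) :
    0 < gramDet V ∧ gramDet V ≤ ∏ i, V i ⬝ᵥ V i := by
  induction n with
  | zero => simp [gramDet]
  | succ n ih =>
    set U := V.submatrix Fin.succ id
    obtain ⟨hUpos, hUle⟩ := ih U (hV.comp Fin.succ (Fin.succ_injective n))
    obtain ⟨r, hr0, hrU, hrle⟩ := exists_orthogonal_component V hUpos.ne'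
    set w := r ᵥ* V
    have hwne : w ≠ 0 := fun h0 => one_ne_zero <| hr0 ▸
      Fintype.linearIndependent_iff.mp hV r (by rw [← vecMul_eq_sum]; exact h0) 0
    have hdet : gramDet V = (w ⬝ᵥ w) * gramDet U := by
      have hU : (V.updateRow 0 w).submatrix Fin.succ id = U := by
        ext i j
        simp [U]
      have h := gramDet_updateRow_vecMul V 0 r
      rw [hr0, one_pow, one_mul, gramDet_eq_mul_of_orthogonal, updateRow_self, hU] at h
      · exact h.symm
      · rwa [updateRow_self, hU]
    refine ⟨hdet ▸ mul_pos (lt_of_le_of_ne (dotProduct_self_nonneg w) ?_) hUpos, ?_⟩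
    · exact Ne.symm (mt dotProduct_self_eq_zero.mp hwne)
    · rw [hdet, Fin.prod_univ_succ]
      exact mul_le_mul hrle hUle hUpos.le (dotProduct_self_nonneg _)

end GramDet

section EntryBounds

variable {K ι : Type*} [Fintype ι] [Ring K] [LinearOrder K] [IsStrictOrderedRing K]

theorem dotProduct_self_le_of_abs_le {v : ι → K} {a : K} (hv : ∀ i, |v i| ≤ a) :
    v ⬝ᵥ v ≤ Fintype.card ι * a ^ 2 := by
  calc v ⬝ᵥ v = ∑ i, |v i| ^ 2 := by simp [dotProduct, sq]
    _ ≤ ∑ _i : ι, a ^ 2 := Finset.sum_le_sum fun i _ =>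
      pow_le_pow_left₀ (abs_nonneg _) (hv i) 2
    _ = Fintype.card ι * a ^ 2 := by simp

omit [Fintype ι] in
theorem abs_vecMul_le {m : Type*} [Fintype m] {v : m → K} {A : Matrix m ι K} {a b : K}
    (hv : ∀ i, |v i| ≤ a) (hA : ∀ i j, |A i j| ≤ b) (j : ι) :
    |(v ᵥ* A) j| ≤ Fintype.card m * (a * b) := by
  calc |(v ᵥ* A) j| ≤ ∑ i, |v i| * |A i j| := by
        simpa [vecMul, dotProduct, abs_mul] using
          Finset.abs_sum_le_sum_abs (fun i => v i * A i j) Finset.univ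
    _ ≤ ∑ _i : m, a * b := Finset.sum_le_sum fun i _ =>
      mul_le_mul (hv i) (hA i j) (abs_nonneg _) ((abs_nonneg _).trans (hv i))
    _ = Fintype.card m * (a * b) := by simp

end EntryBounds

section Lattice

variable {ι : Type*} [Fintype ι]

def integralVectors (ι : Type*) : Submodule ℤ (ι → ℚ) :=
  Submodule.pi Set.univ fun _ => 1

omit [Fintype ι] in
theorem mem_integralVectors {v : ι → ℚ} : v ∈ integralVectors ι ↔ ∀ i, ∃ z : ℤ, v i = z := by
  simp [integralVectors, Submodule.mem_pi, Submodule.mem_one, eq_comm]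

def HasGramDet (M : Submodule ℤ (ι → ℚ)) (c : ℚ) : Prop :=
  ∃ (m : ℕ) (v : Fin m → ι → ℚ),
    LinearIndependent ℚ v ∧ span ℤ (range v) = M ∧ gramDet (of v) = c

omit [Fintype ι] in
theorem span_range_le_iff_exists_intMatrix {m m' : Type*} [Fintype m'] {v : m → ι → ℚ}
    {v' : m' → ι → ℚ} :
    span ℤ (range v) ≤ span ℤ (range v') ↔
      ∃ A : Matrix m m' ℤ, of v = A.map (Int.cast : ℤ → ℚ) * of v' := by
  have hrow : ∀ (A : Matrix m m' ℤ) i,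
      (A.map (Int.cast : ℤ → ℚ) * of v') i = ∑ j, A i j • v' j := fun A i => by
    ext k
    simp [mul_apply, Finset.sum_apply, zsmul_eq_mul]
  rw [span_le, range_subset_iff]
  simp_rw [SetLike.mem_coe, mem_span_range_iff_exists_fun]
  refine Classical.skolem.trans (exists_congr fun A => ?_)
  exact ⟨fun h => funext fun i => (h i).symm.trans (hrow A i).symm,
    fun h i => (hrow A i).symm.trans (congrFun h i).symm⟩

theorem exists_hasGramDet {M : Submodule ℤ (ι → ℚ)} (hM : M.FG) : ∃ c, HasGramDet M c := by
  have : Module.Finite ℤ M := Module.Finite.iff_fg.mpr hM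
  have : Module.Free ℤ M := Module.free_of_finite_type_torsion_free'
  let b := Module.finBasis ℤ M
  refine ⟨_, _, fun i => (b i : ι → ℚ), ?_, ?_, rfl⟩
  · exact (LinearIndependent.iff_fractionRing ℤ ℚ).mp
      (b.linearIndependent.map' M.subtype M.ker_subtype)
  · rw [range_comp', ← M.coe_subtype, span_image, b.span_eq, map_subtype_top]

namespace HasGramDet

variable {M M' : Submodule ℤ (ι → ℚ)} {c c' : ℚ}

theorem pos (h : HasGramDet M c) : 0 < c := by
  obtain ⟨m, v, hv, -, rfl⟩ := h
  exact (gramDet_pos_and_le_prod (of v) hv).1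

theorem exists_nat (h : HasGramDet M c) (hM : M ≤ integralVectors ι) : ∃ z : ℕ, c = z := by
  obtain ⟨m, v, hv, hspan, rfl⟩ := h
  have hint : ∀ i k, ∃ z : ℤ, v i k = z := fun i =>
    mem_integralVectors.mp (hM (hspan ▸ subset_span (mem_range_self i)))
  choose X hX using hint
  have hcast : gramDet (of v) = Int.castRingHom ℚ (gramDet (of X)) := by
    rw [RingHom.map_gramDet]
    congr 1
    ext i k
    simp [hX]
  have hpos : 0 < gramDet (of X) := by
    have := (gramDet_pos_and_le_prod (of v) hv).1
    rwa [hcast, eq_intCast, Int.cast_pos] at this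
  refine ⟨(gramDet (of X)).toNat, ?_⟩
  rw [hcast, eq_intCast, ← Int.cast_natCast, Int.toNat_of_nonneg hpos.le]

theorem exists_eq_sq_mul (h : HasGramDet M c) (h' : HasGramDet M' c') (hle : M ≤ M')
    (hQ : span ℚ (M' : Set (ι → ℚ)) ≤ span ℚ (M : Set (ι → ℚ))) :
    ∃ d : ℤ, c = d ^ 2 * c' ∧ (IsUnit d → M' ≤ M) := by
  obtain ⟨m, v, hv, rfl, rfl⟩ := h
  obtain ⟨m', v', hv', rfl, rfl⟩ := h'
  have hspanQ : span ℚ (range v) = span ℚ (range v') := by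
    rw [span_span_of_tower, span_span_of_tower] at hQ
    exact le_antisymm (by simpa [span_span_of_tower] using span_mono (R := ℚ) hle) hQ
  obtain rfl : m = m' := by
    have h := finrank_span_eq_card hv
    rwa [hspanQ, finrank_span_eq_card hv', Fintype.card_fin, Fintype.card_fin, eq_comm] at h
  obtain ⟨A, hA⟩ := span_range_le_iff_exists_intMatrix.mp hle
  have hmap : ∀ B : Matrix (Fin m) (Fin m) ℤ,
      B.map (Int.cast : ℤ → ℚ) = (Int.castRingHom ℚ).mapMatrix B := fun B => rfl
  refine ⟨A.det, ?_, fun hd => span_range_le_iff_exists_intMatrix.mpr ⟨A⁻¹, ?_⟩⟩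
  · rw [hA, gramDet_mul, hmap, ← RingHom.map_det, eq_intCast]
  · rw [hA, ← Matrix.mul_assoc, hmap, hmap, ← map_mul, nonsing_inv_mul _ hd, map_one,
      Matrix.one_mul]

theorem four_mul_le (h : HasGramDet M c) (h' : HasGramDet M' c') (hlt : M < M')
    (hQ : span ℚ (M' : Set (ι → ℚ)) ≤ span ℚ (M : Set (ι → ℚ))) : 4 * c' ≤ c := by
  obtain ⟨d, rfl, hunit⟩ := h.exists_eq_sq_mul h' hlt.le hQ
  have hd0 : d ≠ 0 := by
    rintro rfl
    simpa using h.pos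
  have hd : 2 ≤ d ∨ d ≤ -2 := by
    have := mt hunit hlt.not_ge
    rw [Int.isUnit_iff] at this
    omega
  have h4 : (4 : ℚ) ≤ (d : ℚ) ^ 2 := by
    have : (4 : ℤ) ≤ d ^ 2 := by rcases hd with hd | hd <;> nlinarith
    exact_mod_cast this
  nlinarith [h'.pos]

theorem exists_nat_four_mul_le {z : ℕ} (h : HasGramDet M z) (hlt : M < M') (hfg : M'.FG)
    (hM' : M' ≤ integralVectors ι)
    (hQ : span ℚ (M' : Set (ι → ℚ)) ≤ span ℚ (M : Set (ι → ℚ))) :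
    ∃ z' : ℕ, HasGramDet M' z' ∧ 0 < z' ∧ 4 * z' ≤ z := by
  obtain ⟨c, hc⟩ := exists_hasGramDet hfg
  obtain ⟨z', rfl⟩ := hc.exists_nat hM'
  refine ⟨z', hc, by exact_mod_cast hc.pos, ?_⟩
  exact_mod_cast h.four_mul_le hc hlt hQ

end HasGramDet

theorem exists_hasGramDet_le_pow {κ : Type*} (f : κ → ι → ℚ) (W : Finset κ)
    (hW : LinearIndepOn ℚ f (W : Set κ)) {Q : ℚ} (hQ : ∀ k ∈ W, f k ⬝ᵥ f k ≤ Q) :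
    ∃ c, HasGramDet (span ℤ (f '' W)) c ∧ c ≤ Q ^ W.card := by
  set v : Fin W.card → ι → ℚ := fun i => f (W.equivFin.symm i)
  have hv : LinearIndependent ℚ v := hW.comp W.equivFin.symm W.equivFin.symm.injective
  have hrange : range v = f '' W := by
    rw [show v = f ∘ (↑) ∘ W.equivFin.symm from rfl, range_comp, range_comp,
      W.equivFin.symm.range_eq_univ, image_univ, Subtype.range_coe]
  refine ⟨gramDet (of v), ⟨_, v, hv, by rw [hrange], rfl⟩, ?_⟩
  calc gramDet (of v) ≤ ∏ i, v i ⬝ᵥ v i := (gramDet_pos_and_le_prod (of v) hv).2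
    _ ≤ ∏ _i : Fin W.card, Q := Finset.prod_le_prod (fun i _ => dotProduct_self_nonneg _)
      fun i _ => hQ _ (W.equivFin.symm i).2
    _ = Q ^ W.card := by simp

end Lattice

theorem vecMul_mem_span_of_forall_mem {R : Type*} [Semiring R] [Module R ℚ]
    [IsScalarTower R ℚ ℚ] {ι : Type*} [Fintype ι] {s : Set (ι → ℚ)} (A : Matrix ι ι ℚ)
    (hs : ∀ x ∈ s, x ᵥ* A ∈ span R s) {x : ι → ℚ} (hx : x ∈ span R s) :
    x ᵥ* A ∈ span R s := by
  induction hx using span_induction with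
  | mem x hx => exact hs x hx
  | zero => simp
  | add x y _ _ hx hy => simpa [add_vecMul] using add_mem hx hy
  | smul r x _ hx => simpa [smul_vecMul] using smul_mem _ r hx

theorem eq_of_chain_stabilizes {K E : Type*} [DivisionRing K] [AddCommGroup E] [Module K E]
    [FiniteDimensional K E] (V : ℕ → Submodule K E) {T : Submodule K E} (hmono : Monotone V)
    (hle : ∀ L, V L ≤ T) (hstable : ∀ L, V (L + 1) ≤ V L → V L = T)
    (h0 : V 0 = T ∨ 1 ≤ Module.finrank K (V 0)) :
    V (Module.finrank K E - 1) = T := by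
  have hgrow : ∀ L, V L = T ∨ L + 1 ≤ Module.finrank K (V L) := by
    intro L
    induction L with
    | zero => exact h0
    | succ L ih =>
      by_cases h : V (L + 1) ≤ V L
      · exact .inl ((le_antisymm h (hmono (Nat.le_add_right L 1))).trans (hstable L h))
      · refine ih.elim (fun ih => absurd (ih ▸ hle (L + 1)) h) fun ih => .inr ?_
        have := finrank_lt_finrank_of_lt
          (lt_of_le_of_ne (hmono (Nat.le_add_right L 1)) fun e => h e.ge)
        omega
  refine (hgrow _).elim id fun h => eq_of_le_of_finrank_le (hle _) ?_
  have := T.finrank_le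
  omega

namespace WeightedAutomaton

variable {S ι : Type*} [Fintype ι] [DecidableEq ι]

def forwardVector (α : ι → ℚ) (μ : S → Matrix ι ι ℚ) (w : List S) : ι → ℚ :=
  α ᵥ* (w.map μ).prod

variable (α : ι → ℚ) (μ : S → Matrix ι ι ℚ)

@[simp]
theorem forwardVector_nil : forwardVector α μ [] = α := by
  simp [forwardVector]

theorem forwardVector_append_singleton (w : List S) (σ : S) :
    forwardVector α μ (w ++ [σ]) = forwardVector α μ w ᵥ* μ σ := by
  simp [forwardVector, vecMul_vecMul]

variable {α μ}

theorem span_range_forwardVector_le {R : Type*} [Semiring R] [Module R ℚ]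
    [IsScalarTower R ℚ ℚ] {W : Set (List S)} (hα : α ∈ span R (forwardVector α μ '' W))
    (hW : ∀ w ∈ W, ∀ σ, forwardVector α μ (w ++ [σ]) ∈ span R (forwardVector α μ '' W)) :
    span R (range (forwardVector α μ)) ≤ span R (forwardVector α μ '' W) := by
  have hinv : ∀ σ, ∀ x ∈ span R (forwardVector α μ '' W),
      x ᵥ* μ σ ∈ span R (forwardVector α μ '' W) := by
    intro σ x hx
    refine vecMul_mem_span_of_forall_mem (μ σ) ?_ hx
    rintro _ ⟨w, hw, rfl⟩
    rw [← forwardVector_append_singleton]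
    exact hW w hw σ
  rw [span_le]
  rintro _ ⟨w, rfl⟩
  induction w using List.reverseRecOn with
  | nil => simpa using hα
  | append_singleton w σ ih =>
    rw [forwardVector_append_singleton]
    exact hinv σ _ ih

theorem exists_length_le_forwardVector_notMem {W : Set (List S)} {L : ℕ}
    (hL : ∀ w ∈ W, w.length ≤ L)
    (hW : span ℤ (forwardVector α μ '' W) ≠ span ℤ (range (forwardVector α μ))) :
    ∃ x : List S, x.length ≤ L + 1 ∧ forwardVector α μ x ∉ span ℤ (forwardVector α μ '' W) := by
  by_contra! h
  refine hW (le_antisymm (span_mono (image_subset_range _ _)) ?_)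
  refine span_range_forwardVector_le (by simpa using h [] (by simp)) fun w hw σ => h _ ?_
  simpa using hL w hw

theorem span_image_length_le_card_sub_one :
    span ℚ (forwardVector α μ '' {w | w.length ≤ Fintype.card ι - 1}) =
      span ℚ (range (forwardVector α μ)) := by
  set V : ℕ → Submodule ℚ (ι → ℚ) := fun L => span ℚ (forwardVector α μ '' {w | w.length ≤ L})
  have hle : ∀ L, V L ≤ span ℚ (range (forwardVector α μ)) :=
    fun L => span_mono (image_subset_range _ _)
  -- a level that adds nothing new is closed under appending letters, hence everything
  have hstable : ∀ L, V (L + 1) ≤ V L → V L = span ℚ (range (forwardVector α μ)) :=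
    fun L h => le_antisymm (hle L) <|
      span_range_forwardVector_le (subset_span ⟨[], by simp, by simp⟩) fun w hw σ =>
        h (subset_span ⟨w ++ [σ], by simpa using hw, rfl⟩)
  have hmono : Monotone V := monotone_nat_of_le_succ fun L =>
    span_mono (image_mono fun w (hw : w.length ≤ L) => show w.length ≤ L + 1 by omega)
  have h0 : V 0 = span ℚ {α} := by
    simp only [V, nonpos_iff_eq_zero, List.length_eq_zero_iff, ofPred_eq_eq_singleton,
      image_singleton, forwardVector_nil]
  rw [← Module.finrank_fintype_fun_eq_card (R := ℚ)]
  refine eq_of_chain_stabilizes V hmono hle hstable ?_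
  by_cases hα : α = 0
  · left
    refine hstable 0 (span_le.mpr ?_)
    rintro _ ⟨w, -, rfl⟩
    simp [forwardVector, hα]
  · right
    rw [h0, finrank_span_singleton hα]

variable (α μ) in
theorem exists_linearIndepOn_length_le :
    ∃ W : Finset (List S), W.card ≤ Fintype.card ι ∧
      (∀ w ∈ W, w.length ≤ Fintype.card ι - 1) ∧
      span ℚ (range (forwardVector α μ)) ≤ span ℚ (forwardVector α μ '' W) ∧
      LinearIndepOn ℚ (forwardVector α μ) (W : Set (List S)) := by
  obtain ⟨b, hbt, -, hspan, hli⟩ := exists_linearIndepOn_extension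
    (linearIndepOn_empty ℚ (forwardVector α μ))
    (empty_subset {w : List S | w.length ≤ Fintype.card ι - 1})
  have : Finite b := hli.finite
  set W := (toFinite b).toFinset
  have hW : (W : Set (List S)) = b := Finite.coe_toFinset _
  refine ⟨W, ?_, fun w hw => hbt (hW ▸ hw), ?_, hW ▸ hli⟩
  · have := (hW ▸ hli).linearIndependent.fintype_card_le_finrank
    simpa using this
  · rw [← span_image_length_le_card_sub_one, hW]
    exact span_le.mpr hspan

theorem abs_forwardVector_le {B : ℚ} (hα : ∀ i, |α i| ≤ B) (hμ : ∀ σ i j, |μ σ i j| ≤ B)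
    (w : List S) (i : ι) : |forwardVector α μ w i| ≤ B * (Fintype.card ι * B) ^ w.length := by
  induction w using List.reverseRecOn generalizing i with
  | nil => simpa using hα i
  | append_singleton w σ ih =>
    rw [forwardVector_append_singleton]
    refine (abs_vecMul_le ih (hμ σ) i).trans_eq ?_
    simp only [List.length_append, List.length_singleton, pow_succ]
    ring

theorem forwardVector_dotProduct_self_le {B : ℚ} (hB : 1 ≤ B) (hα : ∀ i, |α i| ≤ B)
    (hμ : ∀ σ i j, |μ σ i j| ≤ B) {w : List S} (hw : w.length ≤ Fintype.card ι - 1) :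
    forwardVector α μ w ⬝ᵥ forwardVector α μ w ≤
      Fintype.card ι * (B * (Fintype.card ι * B) ^ (Fintype.card ι - 1)) ^ 2 := by
  refine dotProduct_self_le_of_abs_le fun i => (abs_forwardVector_le hα hμ w i).trans ?_
  have hcard : (1 : ℚ) ≤ Fintype.card ι := by
    exact_mod_cast Fintype.card_pos_iff.mpr ⟨i⟩
  exact mul_le_mul_of_nonneg_left
    (pow_le_pow_right₀ (one_le_mul_of_one_le_of_one_le hcard hB) hw) (by linarith)

theorem exists_span_eq_range_of_hasGramDet
    (hint : ∀ w, forwardVector α μ w ∈ integralVectors ι) (z : ℕ) {W : Finset (List S)}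
    {L : ℕ} (hL : ∀ w ∈ W, w.length ≤ L)
    (hQ : span ℚ (range (forwardVector α μ)) ≤ span ℚ (forwardVector α μ '' W))
    (hz : HasGramDet (span ℤ (forwardVector α μ '' W)) z) :
    ∃ W' : Finset (List S),
      span ℤ (forwardVector α μ '' W') = span ℤ (range (forwardVector α μ)) ∧
      W'.card ≤ W.card + Nat.log 4 z ∧ ∀ w ∈ W', w.length ≤ L + Nat.log 4 z := by
  classical
  induction z using Nat.strong_induction_on generalizing W L with
  | _ z ih =>
  by_cases hspan : span ℤ (forwardVector α μ '' W) = span ℤ (range (forwardVector α μ))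
  · exact ⟨W, hspan, by omega, fun w hw => (hL w hw).trans (by omega)⟩
  obtain ⟨x, hxlen, hx⟩ := exists_length_le_forwardVector_notMem hL hspan
  set W₂ : Finset (List S) := insert x W
  have hsub : (W : Set (List S)) ⊆ W₂ := by simp [W₂]
  have hlt : span ℤ (forwardVector α μ '' W) < span ℤ (forwardVector α μ '' W₂) :=
    lt_of_le_of_ne (span_mono (image_mono hsub)) fun h => hx <|
      h ▸ subset_span (mem_image_of_mem _ (by simp [W₂]))
  have hQ₂ : span ℚ (range (forwardVector α μ)) ≤ span ℚ (forwardVector α μ '' W₂) :=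
    hQ.trans (span_mono (image_mono hsub))
  have hlen₂ : ∀ w ∈ W₂, w.length ≤ L + 1 := fun w hw => by
    rcases Finset.mem_insert.mp hw with rfl | hw
    exacts [hxlen, (hL w hw).trans (by omega)]
  obtain ⟨z', hz', hz'pos, h4⟩ := hz.exists_nat_four_mul_le hlt
    (fg_span (W₂.finite_toSet.image _)) (span_le.mpr <| image_subset_iff.mpr fun w _ => hint w)
    (by rw [span_span_of_tower, span_span_of_tower]
        exact (span_mono (image_subset_range _ _)).trans hQ)
  obtain ⟨W', hspan', hcard, hlen⟩ := ih z' (by omega) hlen₂ hQ₂ hz'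
  have hlog : Nat.log 4 z' + 1 ≤ Nat.log 4 z := by
    rw [← Nat.log_mul_base (by norm_num) hz'pos.ne']
    exact Nat.log_mono_right (by omega)
  have hcard₂ : W₂.card ≤ W.card + 1 := Finset.card_insert_le x W
  exact ⟨W', hspan', by omega, fun w hw => (hlen w hw).trans (by omega)⟩

end WeightedAutomaton

theorem abs_intCast_div_le {p q B : ℤ} (hp : |p| ≤ B) (hq : 1 ≤ q) : |(p : ℚ) / q| ≤ B := by
  rw [abs_div, abs_of_pos (by exact_mod_cast hq : (0 : ℚ) < q)]
  exact (div_le_self (abs_nonneg _) (by exact_mod_cast hq)).trans (by exact_mod_cast hp)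

open Real in
theorem le_of_four_pow_le_pow {n m K : ℕ} {B : ℝ} (hB : 1 ≤ B) (hmn : m ≤ n)
    (h : (4 : ℝ) ^ K ≤ (n * (B * (n * B) ^ (n - 1)) ^ 2) ^ m) :
    (K : ℝ) ≤ n * (n - 1 / 2) * logb 2 n + n ^ 2 * logb 2 B := by
  rcases Nat.eq_zero_or_pos n with rfl | hn
  · obtain rfl : m = 0 := by omega
    obtain rfl : K = 0 := by
      by_contra hK
      have := one_lt_pow₀ (by norm_num : (1 : ℝ) < 4) hK
      rw [pow_zero] at h
      linarith
    simp
  have hn1 : (1 : ℝ) ≤ n := by exact_mod_cast hn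
  set Q : ℝ := n * (B * (n * B) ^ (n - 1)) ^ 2
  have hQ : 1 ≤ Q := one_le_mul_of_one_le_of_one_le hn1 <| one_le_pow₀ <|
    one_le_mul_of_one_le_of_one_le hB (one_le_pow₀ (one_le_mul_of_one_le_of_one_le hn1 hB))
  have hlog : 2 * (K : ℝ) ≤ n * logb 2 Q := by
    have := logb_le_logb_of_le (b := 2) (by norm_num) (by positivity)
      (h.trans (pow_le_pow_right₀ hQ hmn))
    rwa [logb_pow, logb_pow, show (4 : ℝ) = 2 ^ 2 by norm_num, logb_pow,
      logb_self_eq_one (by norm_num), mul_one, mul_comm] at this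
  have hQlog : logb 2 Q = logb 2 n + 2 * (logb 2 B + (n - 1) * (logb 2 n + logb 2 B)) := by
    have hB0 : 0 < B := by linarith
    have hn0 : (0 : ℝ) < n := by linarith
    rw [logb_mul hn0.ne' (by positivity), logb_pow, logb_mul hB0.ne' (by positivity), logb_pow,
      logb_mul hn0.ne' hB0.ne', Nat.cast_sub hn, Nat.cast_one]
    ring
  rw [hQlog] at hlog
  linarith

theorem forward_module_finitely_generated_by_short_words_general
    {S : Type*} (n : ℕ)
    (α : Fin n → ℚ) (μ : S → Matrix (Fin n) (Fin n) ℚ)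
    (B : ℤ) (hB : 2 ≤ B)
    (hα : ∀ i : Fin n, ∃ p q : ℤ, |p| ≤ B ∧ 1 ≤ q ∧ q ≤ B ∧ α i = (p : ℚ) / (q : ℚ))
    (hμ : ∀ (σ : S) (i j : Fin n),
      ∃ p q : ℤ, |p| ≤ B ∧ 1 ≤ q ∧ q ≤ B ∧ μ σ i j = (p : ℚ) / (q : ℚ))
    (hint : ∀ (w : List S) (i : Fin n),
      ∃ z : ℤ, Matrix.vecMul α ((w.map μ).prod) i = (z : ℚ)) :
    ∃ W : Finset (List S),
      (W.card : ℝ) ≤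
        ((n : ℝ) * ((n : ℝ) - 1 / 2) * Real.logb 2 (n : ℝ)
          + (n : ℝ) ^ 2 * Real.logb 2 (B : ℝ)) + (n : ℝ) ∧
      (∀ w ∈ W, (w.length : ℝ) ≤
        ((n : ℝ) * ((n : ℝ) - 1 / 2) * Real.logb 2 (n : ℝ)
          + (n : ℝ) ^ 2 * Real.logb 2 (B : ℝ)) + (n : ℝ)) ∧
      Submodule.span ℤ
          ((fun w : List S => Matrix.vecMul α ((w.map μ).prod)) '' (W : Set (List S)))
        = Submodule.span ℤ
          (Set.range (fun w : List S => Matrix.vecMul α ((w.map μ).prod))) := by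
  open WeightedAutomaton in
  have hB1 : (1 : ℤ) ≤ B := by omega
  have hαB : ∀ i, |α i| ≤ B := fun i => by
    obtain ⟨p, q, hp, hq, -, h⟩ := hα i
    exact h ▸ abs_intCast_div_le hp hq
  have hμB : ∀ σ i j, |μ σ i j| ≤ B := fun σ i j => by
    obtain ⟨p, q, hp, hq, -, h⟩ := hμ σ i j
    exact h ▸ abs_intCast_div_le hp hq
  have hintV : ∀ w, forwardVector α μ w ∈ integralVectors (Fin n) :=
    fun w => mem_integralVectors.mpr (hint w)
  obtain ⟨W₁, hW₁card, hW₁len, hW₁span, hW₁li⟩ := exists_linearIndepOn_length_le α μ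
  obtain ⟨c, hc, hcQ⟩ := exists_hasGramDet_le_pow _ W₁ hW₁li fun w hw =>
    forwardVector_dotProduct_self_le (by exact_mod_cast hB1) hαB hμB (hW₁len w hw)
  obtain ⟨z, rfl⟩ := hc.exists_nat <| span_le.mpr <| image_subset_iff.mpr fun w _ => hintV w
  obtain ⟨W, hspan, hcard, hlen⟩ := exists_span_eq_range_of_hasGramDet hintV z hW₁len hW₁span hc
  simp only [Fintype.card_fin] at hW₁card hcQ hlen
  have hK : (Nat.log 4 z : ℝ) ≤ n * (n - 1 / 2) * Real.logb 2 n + n ^ 2 * Real.logb 2 B := by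
    refine le_of_four_pow_le_pow (by exact_mod_cast hB1) hW₁card ?_
    calc (4 : ℝ) ^ Nat.log 4 z ≤ z := by
          exact_mod_cast Nat.pow_log_le_self 4 (by exact_mod_cast hc.pos.ne')
      _ ≤ _ := by exact_mod_cast hcQ
  refine ⟨W, ?_, fun w hw => ?_, hspan⟩
  · have : (W.card : ℝ) ≤ W₁.card + Nat.log 4 z := by exact_mod_cast hcard
    have : (W₁.card : ℝ) ≤ n := by exact_mod_cast hW₁card
    linarith
  · have : (w.length : ℝ) ≤ n + Nat.log 4 z := by exact_mod_cast (hlen w hw).trans (by omega)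
    linarith

/-- Let `A = (α, μ, β)` be a `ℚ`-weighted automaton of dimension `n`
whose entries of `α` and `μ(σ)` are fractions `p/q` with `|p| ≤ B`, `1 ≤ q ≤ B`, for
an integer `B ≥ 2`.  If `α·μ(w) ∈ ℤ^n` for every word `w`, then, with
`k₀ := n(n−1/2)log₂ n + n²log₂ B`, there is a finite set `W` of at most `k₀ + n`
words, each of length at most `k₀ + n`, such that `{α·μ(w) : w ∈ W}` generates the
forward module `span_ℤ{α·μ(w) : w ∈ Σ*}`. -/
theorem forward_module_finitely_generated_by_short_words
    {S : Type*} [Fintype S] (n : ℕ)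
    (α : Fin n → ℚ) (μ : S → Matrix (Fin n) (Fin n) ℚ) (β : Fin n → ℚ)
    (B : ℤ) (hB : 2 ≤ B)
    (hα : ∀ i : Fin n, ∃ p q : ℤ, |p| ≤ B ∧ 1 ≤ q ∧ q ≤ B ∧ α i = (p : ℚ) / (q : ℚ))
    (hμ : ∀ (σ : S) (i j : Fin n),
      ∃ p q : ℤ, |p| ≤ B ∧ 1 ≤ q ∧ q ≤ B ∧ μ σ i j = (p : ℚ) / (q : ℚ))
    (hint : ∀ (w : List S) (i : Fin n),
      ∃ z : ℤ, Matrix.vecMul α ((w.map μ).prod) i = (z : ℚ)) :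
    ∃ W : Finset (List S),
      (W.card : ℝ) ≤
        ((n : ℝ) * ((n : ℝ) - 1 / 2) * Real.logb 2 (n : ℝ)
          + (n : ℝ) ^ 2 * Real.logb 2 (B : ℝ)) + (n : ℝ) ∧
      (∀ w ∈ W, (w.length : ℝ) ≤
        ((n : ℝ) * ((n : ℝ) - 1 / 2) * Real.logb 2 (n : ℝ)
          + (n : ℝ) ^ 2 * Real.logb 2 (B : ℝ)) + (n : ℝ)) ∧
      Submodule.span ℤ
          ((fun w : List S => Matrix.vecMul α ((w.map μ).prod)) '' (W : Set (List S)))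
        = Submodule.span ℤ
          (Set.range (fun w : List S => Matrix.vecMul α ((w.map μ).prod))) :=
  forward_module_finitely_generated_by_short_words_general n α μ B hB hα hμ hint
end

section
/- Let A be a ℚ-weighted automaton over a finite alphabet Σ such that f_A(w) ∈ ℤ for every word w ∈ Σ*. Then there exists a ℤ-weighted automaton A'' over Σ with f_{A''} = f_A that is minimal as a ℚ-weighted automaton: no ℚ-weighted automaton of strictly smaller dimension computes f_A. -/
open Matrix

/-- The function computed by a `ℚ`-weighted automaton `(α, μ, β)`:
`f_A(w) = α·μ(w)·β`, where `μ` extends to words as a monoid homomorphism. -/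
noncomputable def fWA {S ι : Type*} [Fintype ι] [DecidableEq ι]
    (α : ι → ℚ) (μ : S → Matrix ι ι ℚ) (β : ι → ℚ) (w : List S) : ℚ :=
  α ⬝ᵥ ((w.map μ).prod).mulVec β

/-!
Pass to a minimal `ℚ`-automaton `(α, μ, β)` of dimension `m` computing `f`. By minimality the
forward vectors `α μ(w)` span `ℚ^m` (else restricting to their span gives a smaller automaton),
and so do the backward vectors `μ(u) β` (apply this to the transposed automaton). The `ℤ`-span `L`
of the forward vectors contains `α`, is stable under every `μ σ`, and pairs integrally with every
backward vector, because `α μ(w) ⬝ μ(u) β = f(wu)`. Pairing with finitely many spanning backward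
vectors embeds `L` into some `ℤ^N`, so `L` is a lattice of rank at most `m`. Rewriting the
automaton in a `ℤ`-basis `b` of `L` gives integer initial and transition weights, and the final
weights `b i ⬝ β` are integers because `β` is the backward vector of the empty word.
-/

section Automaton

variable {S ι κ : Type*} [Fintype ι] [DecidableEq ι] [Fintype κ] [DecidableEq κ]

theorem fWA_append (α : ι → ℚ) (μ : S → Matrix ι ι ℚ) (β : ι → ℚ) (v u : List S) :
    fWA α μ β (v ++ u) = (α ᵥ* (v.map μ).prod) ⬝ᵥ ((u.map μ).prod *ᵥ β) := by
  rw [fWA, List.map_append, List.prod_append, ← mulVec_mulVec, dotProduct_mulVec]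

theorem fWA_eq_of_mul_eq_mul (α : ι → ℚ) (μ : S → Matrix ι ι ℚ) (β : ι → ℚ)
    (B : Matrix κ ι ℚ) (ν : S → Matrix κ κ ℚ) (hB : ∀ σ, B * μ σ = ν σ * B)
    (a : κ → ℚ) (ha : a ᵥ* B = α) (w : List S) :
    fWA a ν (B *ᵥ β) w = fWA α μ β w := by
  have hprod : B * (w.map μ).prod = (w.map ν).prod * B := by
    induction w with
    | nil => simp
    | cons σ t ih =>
      rw [List.map_cons, List.prod_cons, List.map_cons, List.prod_cons, ← Matrix.mul_assoc, hB,
        Matrix.mul_assoc, ih, Matrix.mul_assoc]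
  rw [fWA, fWA, mulVec_mulVec, ← hprod, ← mulVec_mulVec, dotProduct_mulVec, ha, dotProduct_mulVec]

theorem prod_map_transpose (μ : S → Matrix ι ι ℚ) (w : List S) :
    (w.map fun σ => (μ σ)ᵀ).prod = ((w.reverse.map μ).prod)ᵀ := by
  simp [transpose_list_prod, List.map_reverse, Function.comp_def]

theorem fWA_transpose (α : ι → ℚ) (μ : S → Matrix ι ι ℚ) (β : ι → ℚ) (w : List S) :
    fWA β (fun σ => (μ σ)ᵀ) α w = fWA α μ β w.reverse := by
  rw [fWA, fWA, prod_map_transpose, mulVec_transpose, dotProduct_comm, dotProduct_mulVec]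

end Automaton

section Basis

variable (R : Type*) [CommRing R] [Algebra R ℚ] {S ι κ : Type*} [Fintype κ]

theorem vecMul_basis_repr {L : Submodule R (ι → ℚ)} (b : Module.Basis κ R L) (x : L) :
    (fun i => algebraMap R ℚ (b.repr x i)) ᵥ* Matrix.of (fun i => (b i : ι → ℚ)) = x := by
  conv_rhs => rw [← b.sum_repr x]
  simp only [vecMul_eq_sum, algebraMap_smul, Submodule.coe_sum, Submodule.coe_smul]
  rfl

theorem exists_fWA_eq_of_basis [Fintype ι] [DecidableEq ι] [DecidableEq κ] (α : ι → ℚ)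
    (μ : S → Matrix ι ι ℚ) (β : ι → ℚ) {L : Submodule R (ι → ℚ)} (b : Module.Basis κ R L)
    (hα : α ∈ L) (hμ : ∀ σ, ∀ x ∈ L, x ᵥ* μ σ ∈ L) :
    ∃ (a : κ → R) (ν : S → Matrix κ κ R), ∀ w,
      fWA (fun i => algebraMap R ℚ (a i)) (fun σ => (ν σ).map (algebraMap R ℚ))
        (fun i => (b i : ι → ℚ) ⬝ᵥ β) w = fWA α μ β w := by
  refine ⟨b.repr ⟨α, hα⟩, fun σ => Matrix.of fun i => b.repr ⟨b i ᵥ* μ σ, hμ σ _ (b i).2⟩,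
    fun w => fWA_eq_of_mul_eq_mul α μ β (Matrix.of fun i => (b i : ι → ℚ)) _ (fun σ => ?_) _
      (vecMul_basis_repr R b _) w⟩
  funext i
  exact (vecMul_basis_repr R b ⟨_, hμ σ _ (b i).2⟩).symm

end Basis

section ForwardSpan

variable (R : Type*) [CommRing R] [Algebra R ℚ] {S ι : Type*} [Fintype ι] [DecidableEq ι]

def forwardSpan (α : ι → ℚ) (μ : S → Matrix ι ι ℚ) : Submodule R (ι → ℚ) :=
  Submodule.span R (Set.range fun w : List S => α ᵥ* (w.map μ).prod)

theorem self_mem_forwardSpan (α : ι → ℚ) (μ : S → Matrix ι ι ℚ) : α ∈ forwardSpan R α μ :=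
  Submodule.subset_span ⟨[], by simp⟩

theorem vecMul_mem_forwardSpan {α x : ι → ℚ} {μ : S → Matrix ι ι ℚ}
    (hx : x ∈ forwardSpan R α μ) (σ : S) : x ᵥ* μ σ ∈ forwardSpan R α μ := by
  induction hx using Submodule.span_induction with
  | mem _ h =>
    obtain ⟨w, rfl⟩ := h
    exact Submodule.subset_span ⟨w ++ [σ], by simp [vecMul_vecMul]⟩
  | zero => simp
  | add x y _ _ hx hy => simpa only [add_vecMul] using add_mem hx hy
  | smul r x _ hx => simpa only [smul_vecMul] using Submodule.smul_mem _ r hx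

end ForwardSpan

theorem Module.Finite.of_injective_of_forall_intCast {V ι : Type*} [AddCommGroup V] [Module ℚ V]
    [Finite ι] (f : V →ₗ[ℚ] ι → ℚ) (hf : Function.Injective f) (L : Submodule ℤ V)
    (hL : ∀ x ∈ L, ∀ i, ∃ z : ℤ, f x i = z) : Module.Finite ℤ L := by
  let Λ := LinearMap.range (LinearMap.compLeft (Algebra.linearMap ℤ ℚ) ι)
  let g : L →ₗ[ℤ] ι → ℚ := f.toAddMonoidHom.toIntLinearMap ∘ₗ L.subtype
  have hg (x : L) : g x ∈ Λ := by
    choose z hz using hL x x.2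
    exact ⟨z, funext fun i => (hz i).symm⟩
  refine .of_injective (LinearMap.codRestrict Λ g hg) fun x y hxy => ?_
  exact Subtype.ext (hf (congrArg Subtype.val hxy))

theorem Module.Finite.of_forall_dotProduct_intCast {ι : Type*} [Fintype ι] {s : Set (ι → ℚ)}
    (hs : Submodule.span ℚ s = ⊤) (L : Submodule ℤ (ι → ℚ))
    (hL : ∀ x ∈ L, ∀ y ∈ s, ∃ z : ℤ, x ⬝ᵥ y = z) : Module.Finite ℤ L := by
  obtain ⟨t, hts, hspan, hli⟩ := exists_linearIndependent ℚ s
  have : Finite t := hli.setFinite.to_subtype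
  refine .of_injective_of_forall_intCast (vecMulLinear (Matrix.of fun j (y : t) => (y : ι → ℚ) j))
    ?_ L fun x hx y => hL x hx y (hts y.2)
  rw [← LinearMap.ker_eq_bot, eq_bot_iff]
  intro x hx
  have horth : ∀ y ∈ Submodule.span ℚ t, x ⬝ᵥ y = 0 := by
    intro y hy
    induction hy using Submodule.span_induction with
    | mem y hy => exact congrFun (LinearMap.mem_ker.mp hx) ⟨y, hy⟩
    | zero => exact dotProduct_zero x
    | add y y' _ _ h h' => rw [dotProduct_add, h, h', add_zero]
    | smul c y _ h => rw [dotProduct_smul, h, smul_zero]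
  exact dotProduct_eq_zero x fun y => horth y (by simp [hspan, hs])

theorem Submodule.finrank_int_le_card {ι : Type*} [Fintype ι] (L : Submodule ℤ (ι → ℚ))
    [Module.Finite ℤ L] : Module.finrank ℤ L ≤ Fintype.card ι := by
  have hli := (Module.finBasis ℤ L).linearIndependent.map' L.subtype L.ker_subtype
  simpa using ((LinearIndependent.iff_fractionRing ℤ ℚ).mp hli).fintype_card_le_finrank

section Minimal

variable {S : Type*}

def IsMinimalAutomaton {m : ℕ} (α : Fin m → ℚ) (μ : S → Matrix (Fin m) (Fin m) ℚ)
    (β : Fin m → ℚ) : Prop :=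
  ∀ (k : ℕ) (α' : Fin k → ℚ) (μ' : S → Matrix (Fin k) (Fin k) ℚ) (β' : Fin k → ℚ),
    (∀ w, fWA α' μ' β' w = fWA α μ β w) → m ≤ k

theorem exists_isMinimalAutomaton_fWA_eq {n : ℕ} (α : Fin n → ℚ)
    (μ : S → Matrix (Fin n) (Fin n) ℚ) (β : Fin n → ℚ) :
    ∃ (m : ℕ) (α₀ : Fin m → ℚ) (μ₀ : S → Matrix (Fin m) (Fin m) ℚ) (β₀ : Fin m → ℚ),
      (∀ w, fWA α₀ μ₀ β₀ w = fWA α μ β w) ∧ IsMinimalAutomaton α₀ μ₀ β₀ := by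
  classical
  have hex : ∃ k, ∃ (α' : Fin k → ℚ) (μ' : S → Matrix (Fin k) (Fin k) ℚ) (β' : Fin k → ℚ),
      ∀ w, fWA α' μ' β' w = fWA α μ β w := ⟨n, α, μ, β, fun _ => rfl⟩
  obtain ⟨α₀, μ₀, β₀, hf⟩ := Nat.find_spec hex
  exact ⟨_, α₀, μ₀, β₀, hf, fun k α' μ' β' h =>
    Nat.find_min' hex ⟨α', μ', β', fun w => (h w).trans (hf w)⟩⟩

namespace IsMinimalAutomaton

variable {m : ℕ} {α : Fin m → ℚ} {μ : S → Matrix (Fin m) (Fin m) ℚ} {β : Fin m → ℚ}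

theorem transpose (h : IsMinimalAutomaton α μ β) :
    IsMinimalAutomaton β (fun σ => (μ σ)ᵀ) α := fun k α' μ' β' hk =>
  h k β' (fun σ => (μ' σ)ᵀ) α' fun w => by
    rw [fWA_transpose, hk, fWA_transpose, List.reverse_reverse]

theorem forwardSpan_eq_top (h : IsMinimalAutomaton α μ β) : forwardSpan ℚ α μ = ⊤ := by
  obtain ⟨a, ν, hν⟩ := exists_fWA_eq_of_basis ℚ α μ β (Module.finBasis ℚ (forwardSpan ℚ α μ))
    (self_mem_forwardSpan ℚ α μ) fun σ _ hx => vecMul_mem_forwardSpan ℚ hx σ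
  refine Submodule.eq_top_of_finrank_eq (le_antisymm (Submodule.finrank_le _) ?_)
  simpa using h _ _ _ _ hν

theorem span_mulVec_eq_top (h : IsMinimalAutomaton α μ β) :
    Submodule.span ℚ (Set.range fun u : List S => (u.map μ).prod *ᵥ β) = ⊤ := by
  rw [← h.transpose.forwardSpan_eq_top, forwardSpan,
    ← List.reverse_involutive.surjective.range_comp]
  simp only [Function.comp_def, prod_map_transpose, vecMul_transpose]

end IsMinimalAutomaton

end Minimal

theorem exists_dotProduct_eq_intCast_of_mem_forwardSpan {S ι : Type*} [Fintype ι] [DecidableEq ι]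
    {α β : ι → ℚ} {μ : S → Matrix ι ι ℚ} (hint : ∀ w, ∃ z : ℤ, fWA α μ β w = z) {x : ι → ℚ}
    (hx : x ∈ forwardSpan ℤ α μ) (u : List S) : ∃ z : ℤ, x ⬝ᵥ ((u.map μ).prod *ᵥ β) = z := by
  induction hx using Submodule.span_induction with
  | mem _ h =>
    obtain ⟨v, rfl⟩ := h
    rw [← fWA_append]
    exact hint _
  | zero => exact ⟨0, by simp⟩
  | add x y _ _ hx hy =>
    obtain ⟨a, ha⟩ := hx
    obtain ⟨b, hb⟩ := hy
    exact ⟨a + b, by rw [add_dotProduct, ha, hb, Int.cast_add]⟩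
  | smul c x _ hx =>
    obtain ⟨a, ha⟩ := hx
    exact ⟨c * a, by rw [smul_dotProduct, ha, zsmul_eq_mul, Int.cast_mul]⟩

theorem exists_minimal_Z_automaton_general
    {S : Type*} (n : ℕ)
    (α : Fin n → ℚ) (μ : S → Matrix (Fin n) (Fin n) ℚ) (β : Fin n → ℚ)
    (hint : ∀ w : List S, ∃ z : ℤ, fWA α μ β w = (z : ℚ)) :
    ∃ (n'' : ℕ) (α'' : Fin n'' → ℤ) (μ'' : S → Matrix (Fin n'') (Fin n'') ℤ)
      (β'' : Fin n'' → ℤ),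
      (∀ w : List S,
        fWA (fun i => (α'' i : ℚ)) (fun σ => (μ'' σ).map (fun z => (z : ℚ)))
            (fun i => (β'' i : ℚ)) w
          = fWA α μ β w) ∧
      (∀ (k : ℕ) (α' : Fin k → ℚ) (μ' : S → Matrix (Fin k) (Fin k) ℚ)
          (β' : Fin k → ℚ),
        (∀ w : List S, fWA α' μ' β' w = fWA α μ β w) → n'' ≤ k) := by
  obtain ⟨m, α₀, μ₀, β₀, hf, hmin⟩ := exists_isMinimalAutomaton_fWA_eq α μ β
  have hpair : ∀ x ∈ forwardSpan ℤ α₀ μ₀, ∀ u : List S,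
      ∃ z : ℤ, x ⬝ᵥ ((u.map μ₀).prod *ᵥ β₀) = z :=
    fun x hx => exists_dotProduct_eq_intCast_of_mem_forwardSpan (fun w => hf w ▸ hint w) hx
  have : Module.Finite ℤ (forwardSpan ℤ α₀ μ₀) :=
    .of_forall_dotProduct_intCast hmin.span_mulVec_eq_top _ <| by
      rintro x hx _ ⟨u, rfl⟩
      exact hpair x hx u
  let b := Module.finBasis ℤ (forwardSpan ℤ α₀ μ₀)
  obtain ⟨a, ν, hν⟩ := exists_fWA_eq_of_basis ℤ α₀ μ₀ β₀ b (self_mem_forwardSpan ℤ α₀ μ₀)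
    fun σ _ hx => vecMul_mem_forwardSpan ℤ hx σ
  choose c hc using fun i => hpair (b i) (b i).2 []
  refine ⟨_, a, ν, c, fun w => ?_, fun k α' μ' β' hk =>
    (Submodule.finrank_int_le_card _).trans ?_⟩
  · simpa [← hc] using (hν w).trans (hf w)
  · simpa using hmin k α' μ' β' fun w => (hk w).trans (hf w).symm

/-- If a `ℚ`-weighted automaton `A` computes an integer value on
every word, then there is a `ℤ`-weighted automaton `A''` computing the same function
which is minimal as a `ℚ`-weighted automaton: no `ℚ`-weighted automaton of strictly
smaller dimension computes `f_A`. -/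
theorem exists_minimal_Z_automaton
    {S : Type*} [Fintype S] (n : ℕ)
    (α : Fin n → ℚ) (μ : S → Matrix (Fin n) (Fin n) ℚ) (β : Fin n → ℚ)
    (hint : ∀ w : List S, ∃ z : ℤ, fWA α μ β w = (z : ℚ)) :
    ∃ (n'' : ℕ) (α'' : Fin n'' → ℤ) (μ'' : S → Matrix (Fin n'') (Fin n'') ℤ)
      (β'' : Fin n'' → ℤ),
      (∀ w : List S,
        fWA (fun i => (α'' i : ℚ)) (fun σ => (μ'' σ).map (fun z => (z : ℚ)))
            (fun i => (β'' i : ℚ)) w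
          = fWA α μ β w) ∧
      (∀ (k : ℕ) (α' : Fin k → ℚ) (μ' : S → Matrix (Fin k) (Fin k) ℚ)
          (β' : Fin k → ℚ),
        (∀ w : List S, fWA α' μ' β' w = fWA α μ β w) → n'' ≤ k) :=
  exists_minimal_Z_automaton_general n α μ β hint
end
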